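/- arXiv:1711.04872 — 5 statements merged into one kernel-verified Lean document; each statement's English description precedes it below -/
import Mathlib

section
/- For every positive integer n and every 2n-step Dyck path ℓ, the set partition Φ(ℓ) is a noncrossing partition of {0, 1, …, n−1}. -/
/-- `ℓ : ℕ → ℕ` is a (normalized) `2n`-step Dyck path: `ℓ 0 = 0`, `ℓ j = 0` for every
`j ≥ 2n` (in particular `ℓ (2n) = 0`), and consecutive values differ by exactly `1`
up to time `2n`. -/
def IsDyckPath (n : ℕ) (ℓ : ℕ → ℕ) : Prop :=
  ℓ 0 = 0 ∧ (∀ j, 2 * n ≤ j → ℓ j = 0) ∧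
    ∀ k, k < 2 * n → ℓ (k + 1) = ℓ k + 1 ∨ ℓ k = ℓ (k + 1) + 1

/-- The relation `i ∼_ℓ j` for a `2n`-step Dyck path:
`i, j ≤ 2n` and `ℓ i = ℓ j = min_{min(i,j) ≤ k ≤ max(i,j)} ℓ k`. -/
def DyckRel (n : ℕ) (ℓ : ℕ → ℕ) (i j : ℕ) : Prop :=
  i ≤ 2 * n ∧ j ≤ 2 * n ∧ ℓ i = ℓ j ∧
    ∀ k, min i j ≤ k → k ≤ max i j → ℓ i ≤ ℓ k

/-- `P` is a set partition of `{0, 1, …, n-1}`, blocks being the elements of `P`. -/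
def IsPartitionOf (n : ℕ) (P : Set (Set ℕ)) : Prop :=
  (∀ B ∈ P, B.Nonempty) ∧ (∀ B ∈ P, B ⊆ Set.Iio n) ∧
    ∀ i, i < n → ∃! B, B ∈ P ∧ i ∈ B

/-- A collection of blocks is noncrossing: there are no `a < b < c < d`
with `a, c` in one block and `b, d` in a different block. -/
def IsNoncrossing (P : Set (Set ℕ)) : Prop :=
  ∀ a b c d : ℕ, a < b → b < c → c < d →
    ∀ B ∈ P, ∀ B' ∈ P, a ∈ B → c ∈ B → b ∈ B' → d ∈ B' → B = B'

/-- `P` is a noncrossing partition of `{0, 1, …, n-1}`. -/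
def IsNCPartition (n : ℕ) (P : Set (Set ℕ)) : Prop :=
  IsPartitionOf n P ∧ IsNoncrossing P

/-- `P` is a noncrossing pair partition of `{0, 1, …, n-1}`:
a noncrossing partition all of whose blocks have exactly two elements. -/
def IsNCPairPartition (n : ℕ) (P : Set (Set ℕ)) : Prop :=
  IsNCPartition n P ∧ ∀ B ∈ P, B.ncard = 2

/-- `Φ(ℓ)`: the set partition of `{0, 1, …, n-1}` whose blocks are the equivalence
classes of `∼_ℓ` among the even indices `0, 2, …, 2n-2`, identifying `2j` with `j`. -/
def dyckEvenClasses (n : ℕ) (ℓ : ℕ → ℕ) : Set (Set ℕ) :=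
  {B | ∃ j, j < n ∧ B = {i | i < n ∧ DyckRel n ℓ (2 * i) (2 * j)}}

/-- `Ψ(ℓ)`: the set partition of `{0, 1, …, n-1}` whose blocks are the equivalence
classes of `∼_ℓ` among the odd indices `1, 3, …, 2n-1`, identifying `2j+1` with `j`. -/
def dyckOddClasses (n : ℕ) (ℓ : ℕ → ℕ) : Set (Set ℕ) :=
  {B | ∃ j, j < n ∧ B = {i | i < n ∧ DyckRel n ℓ (2 * i + 1) (2 * j + 1)}}

/-- The set partition of `{0, 1, …, 2n-1}` whose blocks are the equivalence classes of
`∼_ℓ` among the even indices `0, 2, …, 2n-2` together with the equivalence classes of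
`∼_ℓ` among the odd indices `1, 3, …, 2n-1`. -/
def dyckParityClasses (n : ℕ) (ℓ : ℕ → ℕ) : Set (Set ℕ) :=
  {B | ∃ j, j < 2 * n ∧ B = {i | i < 2 * n ∧ i % 2 = j % 2 ∧ DyckRel n ℓ i j}}

/-- The vertex `ω_n^k = exp(2πik/n)` of the regular `n`-gon. -/
noncomputable def vtx (n k : ℕ) : ℂ :=
  Complex.exp (2 * Real.pi * Complex.I * k / n)

/-- The point `exp(2πis)` of the unit circle. -/
noncomputable def circlePt (s : ℝ) : ℂ :=
  Complex.exp (2 * Real.pi * Complex.I * s)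

/-- The closed polygonal set associated with a block `B ⊆ {0, …, n-1}`: the union of the
segments joining cyclically consecutive vertices `ω_n^i`, `i ∈ B` (edges join `i < j` in `B`
with no element of `B` strictly between them, together with the closing edge joining the
minimum and the maximum of `B`; a singleton contributes a single point). -/
noncomputable def blockPolygon (n : ℕ) (B : Set ℕ) : Set ℂ :=
  ⋃ i ∈ B, ⋃ j ∈ B,
    ⋃ (_ : i ≤ j ∧ ((∀ k ∈ B, ¬(i < k ∧ k < j)) ∨ (∀ k ∈ B, i ≤ k ∧ k ≤ j))),
      segment ℝ (vtx n i) (vtx n j)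

/-- The lamination `Λ_n(P) ⊆ ℂ` of a set partition `P` of `{0, …, n-1}`. -/
noncomputable def lamination (n : ℕ) (P : Set (Set ℕ)) : Set ℂ :=
  ⋃ B ∈ P, blockPolygon n B

/-- The insert move at position `k` on a `2n`-step Dyck path: insert one up-step
followed by one down-step right after time `k`. -/
def insertMove (ℓ : ℕ → ℕ) (k : ℕ) : ℕ → ℕ :=
  fun j => if j ≤ k then ℓ j else if j = k + 1 then ℓ k + 1 else ℓ (j - 2)

/-- `m(ℓ,k)`: the first time after `k` (and at most `2n`) at which the path goes strictly
below its height at time `k`, or `2n+1` if there is no such time. -/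
noncomputable def liftTime (n : ℕ) (ℓ : ℕ → ℕ) (k : ℕ) : ℕ :=
  sInf ({j | k < j ∧ j ≤ 2 * n ∧ ℓ j < ℓ k} ∪ {2 * n + 1})

/-- The lift move at position `k` on a `2n`-step Dyck path: lift up by one the part of the
path between time `k` and time `m(ℓ,k)`. -/
noncomputable def liftMove (n : ℕ) (ℓ : ℕ → ℕ) (k : ℕ) : ℕ → ℕ :=
  fun j => if j ≤ k then ℓ j
    else if j ≤ liftTime n ℓ k then ℓ (j - 1) + 1
    else ℓ (j - 2)

/-- Apply the move `ε ∈ {insert, lift}` (`true` = insert, `false` = lift) at position `k`. -/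
noncomputable def applyMove (n : ℕ) (ℓ : ℕ → ℕ) (k : ℕ) (ε : Bool) : ℕ → ℕ :=
  if ε then insertMove ℓ k else liftMove n ℓ k

/-- The halving map sending a `4n`-step Dyck path `ℓ` (with `|ℓ_{2k+2} - ℓ_{2k}| = 2`)
to the path `(ℓ_0/2, ℓ_2/2, …, ℓ_{4n}/2)`. -/
def halveMap (ℓ : ℕ → ℕ) : ℕ → ℕ := fun j => ℓ (2 * j) / 2

/-- `φ(j) = ⌈j/2⌉ mod n`. -/
def pairPhi (n j : ℕ) : ℕ := ((j + 1) / 2) % n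

/-- The edge relation on `{0, …, n-1}`: `x` and `y` are joined whenever `x = φ(a)` and
`y = φ(b)` for some block `{a, b}` of `Q`. -/
def pairRel (n : ℕ) (Q : Set (Set ℕ)) (x y : ℕ) : Prop :=
  ∃ B ∈ Q, ∃ a ∈ B, ∃ b ∈ B, pairPhi n a = x ∧ pairPhi n b = y

/-- `π(Q)`: the set partition of `{0, …, n-1}` whose blocks are the connected components of
the graph on `{0, …, n-1}` with an edge `{φ(a), φ(b)}` for each block `{a, b}` of `Q`. -/
def pairProj (n : ℕ) (Q : Set (Set ℕ)) : Set (Set ℕ) :=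
  {C | ∃ x, x < n ∧ C = {y | Relation.ReflTransGen (pairRel n Q) x y}}

/-- `A` is a lamination of the closed unit disk: a closed subset of the disk which is a union
of chords (segments with endpoints on the unit circle, possibly degenerate) whose
intersections with the open unit disk are pairwise disjoint. -/
def IsLamination (A : Set ℂ) : Prop :=
  IsClosed A ∧ A ⊆ Metric.closedBall (0 : ℂ) 1 ∧
    ∃ C : Set (ℂ × ℂ),
      (∀ p ∈ C, ‖p.1‖ = 1 ∧ ‖p.2‖ = 1) ∧
      A = ⋃ p ∈ C, segment ℝ p.1 p.2 ∧
      ∀ p ∈ C, ∀ q ∈ C, segment ℝ p.1 p.2 ≠ segment ℝ q.1 q.2 →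
        Disjoint (segment ℝ p.1 p.2 ∩ Metric.ball (0 : ℂ) 1)
          (segment ℝ q.1 q.2 ∩ Metric.ball (0 : ℂ) 1)

/-- `s ∼_f t`: `f s = f t = min_{min(s,t) ≤ r ≤ max(s,t)} f r`. -/
def simRel (f : ℝ → ℝ) (s t : ℝ) : Prop :=
  f s = f t ∧ ∀ r, min s t ≤ r → r ≤ max s t → f s ≤ f r

/-- `L(f)`: the union of the chords `[exp(2πis), exp(2πit)]` over all `s ∼_f t`
in `[0,1]`. -/
noncomputable def brownLam (f : ℝ → ℝ) : Set ℂ :=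
  ⋃ s ∈ Set.Icc (0 : ℝ) 1, ⋃ t ∈ Set.Icc (0 : ℝ) 1, ⋃ (_ : simRel f s t),
    segment ℝ (circlePt s) (circlePt t)

lemma dyckRel_refl {n : ℕ} {ℓ : ℕ → ℕ} {i : ℕ} (h : i ≤ 2 * n) : DyckRel n ℓ i i :=
  ⟨h, h, rfl, fun k hk1 hk2 => by
    simp only [min_self, max_self] at hk1 hk2
    have : k = i := le_antisymm hk2 hk1
    rw [this]⟩

lemma dyckRel_symm {n : ℕ} {ℓ : ℕ → ℕ} {i j : ℕ} (h : DyckRel n ℓ i j) :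
    DyckRel n ℓ j i := by
  obtain ⟨h1, h2, h3, h4⟩ := h
  exact ⟨h2, h1, h3.symm, fun k hk1 hk2 => h3 ▸ h4 k (by omega) (by omega)⟩

lemma dyckRel_trans {n : ℕ} {ℓ : ℕ → ℕ} {i j k : ℕ} (h : DyckRel n ℓ i j)
    (h' : DyckRel n ℓ j k) : DyckRel n ℓ i k := by
  obtain ⟨h1, h2, h3, h4⟩ := h
  obtain ⟨h1', h2', h3', h4'⟩ := h'
  refine ⟨h1, h2', h3.trans h3', fun r hr1 hr2 => ?_⟩
  have hcase : (min i j ≤ r ∧ r ≤ max i j) ∨ (min j k ≤ r ∧ r ≤ max j k) := by omega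
  rcases hcase with ⟨ha, hb⟩ | ⟨ha, hb⟩
  · exact h4 r ha hb
  · exact h3 ▸ h4' r ha hb

/-- For every positive integer `n` and every `2n`-step Dyck path `ℓ`,
the set partition `Φ(ℓ)` is a noncrossing partition of `{0, 1, …, n-1}`. -/
theorem dyckEvenClasses_isNCPartition (n : ℕ) (hn : 0 < n) (ℓ : ℕ → ℕ)
    (hℓ : IsDyckPath n ℓ) :
    IsNCPartition n (dyckEvenClasses n ℓ) := by
  -- class equality lemma
  have classEq : ∀ j j' : ℕ, DyckRel n ℓ (2 * j) (2 * j') →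
      {i | i < n ∧ DyckRel n ℓ (2 * i) (2 * j)} =
        {i | i < n ∧ DyckRel n ℓ (2 * i) (2 * j')} := by
    intro j j' hrel
    ext x
    constructor
    · rintro ⟨hx, hr⟩
      exact ⟨hx, dyckRel_trans hr hrel⟩
    · rintro ⟨hx, hr⟩
      exact ⟨hx, dyckRel_trans hr (dyckRel_symm hrel)⟩
  refine ⟨⟨?_, ?_, ?_⟩, ?_⟩
  · -- nonempty
    rintro B ⟨j, hj, rfl⟩
    exact ⟨j, hj, dyckRel_refl (by omega)⟩
  · -- subsets
    rintro B ⟨j, hj, rfl⟩ x ⟨hx, _⟩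
    exact hx
  · -- existence and uniqueness
    intro i hi
    refine ⟨{x | x < n ∧ DyckRel n ℓ (2 * x) (2 * i)}, ⟨⟨i, hi, rfl⟩,
      ⟨hi, dyckRel_refl (by omega)⟩⟩, ?_⟩
    rintro B ⟨⟨j, hj, rfl⟩, ⟨hi', hrel⟩⟩
    exact classEq j i (dyckRel_symm hrel)
  · -- noncrossing
    rintro a b c d hab hbc hcd B ⟨j, hj, rfl⟩ B' ⟨j', hj', rfl⟩ haB hcB hbB hdB
    obtain ⟨ha, harel⟩ := haB
    obtain ⟨hc, hcrel⟩ := hcB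
    obtain ⟨hb, hbrel⟩ := hbB
    obtain ⟨hd, hdrel⟩ := hdB
    -- 2a ∼ 2c and 2b ∼ 2d
    have hac : DyckRel n ℓ (2 * a) (2 * c) := dyckRel_trans harel (dyckRel_symm hcrel)
    have hbd : DyckRel n ℓ (2 * b) (2 * d) := dyckRel_trans hbrel (dyckRel_symm hdrel)
    -- ℓ (2b) ≥ ℓ (2a), ℓ (2c) ≥ ℓ (2b)
    have h1 : ℓ (2 * a) ≤ ℓ (2 * b) := hac.2.2.2 (2 * b) (by omega) (by omega)
    have h2 : ℓ (2 * b) ≤ ℓ (2 * c) := hbd.2.2.2 (2 * c) (by omega) (by omega)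
    have heq : ℓ (2 * a) = ℓ (2 * b) := by
      have := hac.2.2.1
      omega
    -- 2a ∼ 2b
    have hab' : DyckRel n ℓ (2 * a) (2 * b) := by
      refine ⟨by omega, by omega, heq, fun k hk1 hk2 => ?_⟩
      exact hac.2.2.2 k (by omega) (by omega)
    -- b belongs to both classes: classes equal
    have hb1 : DyckRel n ℓ (2 * b) (2 * j) := dyckRel_trans (dyckRel_symm hab') harel
    calc {i | i < n ∧ DyckRel n ℓ (2 * i) (2 * j)}
        = {i | i < n ∧ DyckRel n ℓ (2 * i) (2 * b)} :=
          classEq j b (dyckRel_symm hb1)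
      _ = {i | i < n ∧ DyckRel n ℓ (2 * i) (2 * j')} :=
          classEq b j' hbrel
end

section
/- For every positive integer n, the map ℓ ↦ Φ(ℓ) is a bijection from the set of 2n-step Dyck paths onto the set of noncrossing partitions of {0, 1, …, n−1}. -/
namespace DyckNC

/-! ### Basic path lemmas -/

theorem parity {n : ℕ} {ℓ : ℕ → ℕ} (hD : IsDyckPath n ℓ) :
    ∀ t, t ≤ 2 * n → ℓ t % 2 = t % 2 := by
  intro t
  induction t with
  | zero => intro _; simp [hD.1]
  | succ t ih =>
    intro ht
    have h1 := ih (by omega)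
    rcases hD.2.2 t (by omega) with h | h <;> omega

theorem lastEq {n : ℕ} {ℓ : ℕ → ℕ} (hD : IsDyckPath n ℓ) {b v : ℕ} (hb : b ≤ 2 * n)
    (hv : v < ℓ b) : ∃ t, t < b ∧ ℓ t = v ∧ ∀ s, t < s → s ≤ b → v < ℓ s := by
  classical
  have h0 : ℓ 0 ≤ v := by simp [hD.1]
  set t := Nat.findGreatest (P := fun s => ℓ s ≤ v) b with htdef
  have hspec : ℓ t ≤ v := Nat.findGreatest_spec (P := fun s => ℓ s ≤ v) (Nat.zero_le b) h0
  have htle : t ≤ b := Nat.findGreatest_le (P := fun s => ℓ s ≤ v) b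
  have hgr : ∀ s, t < s → s ≤ b → v < ℓ s := by
    intro s hs hsb
    have h2 : ¬ (ℓ s ≤ v) :=
      Nat.findGreatest_is_greatest (P := fun s => ℓ s ≤ v) hs hsb
    omega
  have htb : t < b := by
    rcases eq_or_lt_of_le htle with h | h
    · exfalso; rw [h] at hspec; omega
    · exact h
  have hstep := hD.2.2 t (by omega)
  have h1 : v < ℓ (t + 1) := hgr (t + 1) (by omega) (by omega)
  exact ⟨t, htb, by omega, hgr⟩

theorem firstReturn {n : ℕ} {ℓ : ℕ → ℕ} (hD : IsDyckPath n ℓ) {a v : ℕ} (ha : ℓ a = v)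
    (hup : ℓ (a + 1) = v + 1) (han : a < 2 * n) :
    ∃ t, a < t ∧ t ≤ 2 * n ∧ ℓ t = v ∧ ∀ s, a < s → s < t → v < ℓ s := by
  set S : Set ℕ := {s | a < s ∧ s ≤ 2 * n ∧ ℓ s ≤ v} with hS
  have hmem : 2 * n ∈ S := ⟨han, le_rfl, by rw [hD.2.1 (2 * n) le_rfl]; omega⟩
  have hne : S.Nonempty := ⟨_, hmem⟩
  obtain ⟨ht1, ht2, ht3⟩ := Nat.sInf_mem hne
  have hmin : ∀ s, a < s → s < sInf S → v < ℓ s := by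
    intro s hs hst
    have h2 := Nat.notMem_of_lt_sInf hst
    by_contra h
    exact h2 ⟨hs, by omega, by omega⟩
  have htne : sInf S ≠ a + 1 := by
    intro h; rw [h] at ht3; omega
  have h1 : v < ℓ (sInf S - 1) := hmin (sInf S - 1) (by omega) (by omega)
  have hstep := hD.2.2 (sInf S - 1) (by omega)
  rw [Nat.sub_add_cancel (by omega)] at hstep
  exact ⟨sInf S, ht1, ht2, by omega, hmin⟩

/-! ### DyckRel is an equivalence -/

theorem dyckRel_refl {n : ℕ} {ℓ : ℕ → ℕ} {i : ℕ} (h : i ≤ 2 * n) : DyckRel n ℓ i i := by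
  refine ⟨h, h, rfl, fun k hk hk' => ?_⟩
  have : k = i := by omega
  rw [this]

theorem dyckRel_symm {n : ℕ} {ℓ : ℕ → ℕ} {i j : ℕ} (h : DyckRel n ℓ i j) :
    DyckRel n ℓ j i := by
  obtain ⟨h1, h2, h3, h4⟩ := h
  exact ⟨h2, h1, h3.symm, fun k hk hk' => by rw [← h3]; exact h4 k (by omega) (by omega)⟩

theorem dyckRel_trans {n : ℕ} {ℓ : ℕ → ℕ} {i j k : ℕ} (h : DyckRel n ℓ i j)
    (h' : DyckRel n ℓ j k) : DyckRel n ℓ i k := by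
  obtain ⟨h1, h2, h3, h4⟩ := h
  obtain ⟨h1', h2', h3', h4'⟩ := h'
  refine ⟨h1, h2', h3.trans h3', fun m hm hm' => ?_⟩
  rcases (show (min i j ≤ m ∧ m ≤ max i j) ∨ (min j k ≤ m ∧ m ≤ max j k) by omega) with
    ⟨u1, u2⟩ | ⟨u1, u2⟩
  · exact h4 m u1 u2
  · rw [h3]; exact h4' m u1 u2

/-! ### `Φ(ℓ)` is a noncrossing partition -/

theorem class_eq {n : ℕ} {ℓ : ℕ → ℕ} {i m : ℕ} (h : DyckRel n ℓ (2 * i) (2 * m)) :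
    {x | x < n ∧ DyckRel n ℓ (2 * x) (2 * m)} = {x | x < n ∧ DyckRel n ℓ (2 * x) (2 * i)} := by
  ext x
  constructor
  · rintro ⟨hx, hr⟩; exact ⟨hx, dyckRel_trans hr (dyckRel_symm h)⟩
  · rintro ⟨hx, hr⟩; exact ⟨hx, dyckRel_trans hr h⟩

theorem phi_isNC {n : ℕ} {ℓ : ℕ → ℕ} (hD : IsDyckPath n ℓ) (hn : 0 < n) :
    IsNCPartition n (dyckEvenClasses n ℓ) := by
  constructor
  · refine ⟨?_, ?_, ?_⟩
    · rintro B ⟨m, hm, rfl⟩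
      exact ⟨m, hm, dyckRel_refl (by omega)⟩
    · rintro B ⟨m, hm, rfl⟩ x ⟨hx, _⟩
      exact hx
    · intro i hi
      refine ⟨{x | x < n ∧ DyckRel n ℓ (2 * x) (2 * i)}, ⟨⟨i, hi, rfl⟩, hi, dyckRel_refl (by omega)⟩, ?_⟩
      rintro B ⟨⟨m, hm, rfl⟩, hiB⟩
      exact class_eq hiB.2
  · rintro a b c d h1 h2 h3 B ⟨m, hm, rfl⟩ B' ⟨m', hm', rfl⟩ ⟨han, ham⟩ ⟨hcn, hcm⟩ ⟨hbn, hbm'⟩ ⟨hdn, hdm'⟩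
    have hac : DyckRel n ℓ (2 * a) (2 * c) := dyckRel_trans ham (dyckRel_symm hcm)
    have hbd : DyckRel n ℓ (2 * b) (2 * d) := dyckRel_trans hbm' (dyckRel_symm hdm')
    have e1 : ℓ (2 * a) ≤ ℓ (2 * b) := hac.2.2.2 (2 * b) (by omega) (by omega)
    have e2 : ℓ (2 * b) ≤ ℓ (2 * c) := hbd.2.2.2 (2 * c) (by omega) (by omega)
    have e3 : ℓ (2 * a) = ℓ (2 * c) := hac.2.2.1
    have hab : DyckRel n ℓ (2 * a) (2 * b) := by
      refine ⟨hac.1, hbd.1, by omega, fun k hk1 hk2 => ?_⟩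
      exact hac.2.2.2 k (by omega) (by omega)
    calc {x | x < n ∧ DyckRel n ℓ (2 * x) (2 * m)}
        = {x | x < n ∧ DyckRel n ℓ (2 * x) (2 * a)} := class_eq ham
      _ = {x | x < n ∧ DyckRel n ℓ (2 * x) (2 * b)} := class_eq (dyckRel_symm hab)
      _ = {x | x < n ∧ DyckRel n ℓ (2 * x) (2 * m')} := (class_eq hbm').symm


/-! ### Block relation of a partition -/

def blockRel (P : Set (Set ℕ)) (i k : ℕ) : Prop := ∃ B ∈ P, i ∈ B ∧ k ∈ B

theorem blockRel_symm {P : Set (Set ℕ)} {i k : ℕ} (h : blockRel P i k) : blockRel P k i := by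
  obtain ⟨B, hB, h1, h2⟩ := h; exact ⟨B, hB, h2, h1⟩

theorem blockRel_refl {n : ℕ} {P : Set (Set ℕ)} (hP : IsPartitionOf n P) {i : ℕ}
    (hi : i < n) : blockRel P i i := by
  obtain ⟨B, ⟨hBP, hiB⟩, -⟩ := hP.2.2 i hi
  exact ⟨B, hBP, hiB, hiB⟩

theorem blockRel_ltn {n : ℕ} {P : Set (Set ℕ)} (hP : IsPartitionOf n P) {i k : ℕ}
    (h : blockRel P i k) : i < n ∧ k < n := by
  obtain ⟨B, hB, hi, hk⟩ := h
  exact ⟨hP.2.1 B hB hi, hP.2.1 B hB hk⟩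

theorem blockRel_trans {n : ℕ} {P : Set (Set ℕ)} (hP : IsPartitionOf n P) {i k l : ℕ}
    (h : blockRel P i k) (h' : blockRel P k l) : blockRel P i l := by
  obtain ⟨B, hB, hi, hk⟩ := h
  obtain ⟨B', hB', hk', hl⟩ := h'
  have hkn : k < n := hP.2.1 B hB hk
  obtain ⟨C, -, hun⟩ := hP.2.2 k hkn
  have e1 := hun B ⟨hB, hk⟩
  have e2 := hun B' ⟨hB', hk'⟩
  refine ⟨B, hB, hi, ?_⟩
  rw [e1, ← e2]; exact hl

theorem cross {n : ℕ} {P : Set (Set ℕ)} (hP : IsPartitionOf n P) (hNC : IsNoncrossing P)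
    {a b c d : ℕ} (h1 : a < b) (h2 : b < c) (h3 : c < d) (hac : blockRel P a c)
    (hbd : blockRel P b d) : blockRel P a b := by
  obtain ⟨B, hB, haB, hcB⟩ := hac
  obtain ⟨B', hB', hbB, hdB⟩ := hbd
  have hBB := hNC a b c d h1 h2 h3 B hB B' hB' haB hcB hbB hdB
  exact ⟨B, hB, haB, by rw [hBB]; exact hbB⟩

/-! ### The next element, the open count, and the inverse map -/

open Classical in
noncomputable def nxt (n : ℕ) (P : Set (Set ℕ)) (i : ℕ) : ℕ :=
  if ({k | i < k ∧ k < n ∧ blockRel P i k}).Nonempty then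
    sInf {k | i < k ∧ k < n ∧ blockRel P i k}
  else if blockRel P i 0 then n else i

theorem nxt_spec (n : ℕ) (P : Set (Set ℕ)) (i : ℕ) :
    (i < nxt n P i ∧ nxt n P i < n ∧ blockRel P i (nxt n P i) ∧
       ∀ k, i < k → k < nxt n P i → ¬blockRel P i k) ∨
    (nxt n P i = n ∧ blockRel P i 0 ∧ ∀ k, i < k → k < n → ¬blockRel P i k) ∨
    (nxt n P i = i ∧ ¬blockRel P i 0 ∧ ∀ k, i < k → k < n → ¬blockRel P i k) := by
  classical
  by_cases hne : ({k | i < k ∧ k < n ∧ blockRel P i k}).Nonempty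
  · left
    have hval : nxt n P i = sInf {k | i < k ∧ k < n ∧ blockRel P i k} := by
      unfold nxt; rw [if_pos hne]
    obtain ⟨h1, h2, h3⟩ := Nat.sInf_mem hne
    rw [hval]
    refine ⟨h1, h2, h3, fun k hk hk' hrel => ?_⟩
    exact Nat.notMem_of_lt_sInf hk' ⟨hk, by omega, hrel⟩
  · have hnone : ∀ k, i < k → k < n → ¬blockRel P i k := by
      intro k hk hk' hrel; exact hne ⟨k, hk, hk', hrel⟩
    by_cases h0 : blockRel P i 0
    · right; left
      have hval : nxt n P i = n := by unfold nxt; rw [if_neg hne, if_pos h0]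
      exact ⟨hval, h0, hnone⟩
    · right; right
      have hval : nxt n P i = i := by unfold nxt; rw [if_neg hne, if_neg h0]
      exact ⟨hval, h0, hnone⟩

noncomputable def openSet (n : ℕ) (P : Set (Set ℕ)) (j : ℕ) : Finset ℕ :=
  (Finset.range j).filter (fun i => j < nxt n P i)

noncomputable def cnt (n : ℕ) (P : Set (Set ℕ)) (j : ℕ) : ℕ := (openSet n P j).card

theorem mem_openSet {n : ℕ} {P : Set (Set ℕ)} {j i : ℕ} :
    i ∈ openSet n P j ↔ i < j ∧ j < nxt n P i := by
  unfold openSet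
  rw [Finset.mem_filter, Finset.mem_range]

noncomputable def F (n : ℕ) (P : Set (Set ℕ)) : ℕ → ℕ := fun t =>
  if 2 * n ≤ t then 0
  else if t % 2 = 0 then 2 * cnt n P (t / 2)
  else if t / 2 < nxt n P (t / 2) then 2 * cnt n P (t / 2) + 1 else 2 * cnt n P (t / 2) - 1

theorem F_top {n : ℕ} {P : Set (Set ℕ)} {t : ℕ} (h : 2 * n ≤ t) : F n P t = 0 := by
  unfold F; rw [if_pos h]

theorem F_even {n : ℕ} {P : Set (Set ℕ)} {j : ℕ} (hj : j < n) :
    F n P (2 * j) = 2 * cnt n P j := by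
  unfold F
  rw [if_neg (by omega), if_pos (by omega), show 2 * j / 2 = j from by omega]

theorem F_odd_up {n : ℕ} {P : Set (Set ℕ)} {j : ℕ} (hj : j < n) (h : j < nxt n P j) :
    F n P (2 * j + 1) = 2 * cnt n P j + 1 := by
  unfold F
  rw [if_neg (by omega), if_neg (by omega)]
  have e : (2 * j + 1) / 2 = j := by omega
  rw [e, if_pos h]

theorem F_odd_down {n : ℕ} {P : Set (Set ℕ)} {j : ℕ} (hj : j < n) (h : ¬ j < nxt n P j) :
    F n P (2 * j + 1) = 2 * cnt n P j - 1 := by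
  unfold F
  rw [if_neg (by omega), if_neg (by omega)]
  have e : (2 * j + 1) / 2 = j := by omega
  rw [e, if_neg h]

/-! ### The strictly-open set of a Dyck path -/

noncomputable def sfin (ℓ : ℕ → ℕ) (j : ℕ) : Finset ℕ :=
  @Finset.filter _ (fun i => ∀ t ∈ Finset.Icc (2 * i + 1) (2 * j), ℓ (2 * i) < ℓ t)
    (fun i => Finset.decidableDforallFinset) (Finset.range j)

theorem mem_sfin {ℓ : ℕ → ℕ} {j i : ℕ} :
    i ∈ sfin ℓ j ↔ i < j ∧ ∀ t, 2 * i < t → t ≤ 2 * j → ℓ (2 * i) < ℓ t := by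
  unfold sfin
  rw [Finset.mem_filter, Finset.mem_range]
  constructor
  · rintro ⟨h1, h2⟩
    exact ⟨h1, fun t ht1 ht2 => h2 t (Finset.mem_Icc.mpr ⟨by omega, ht2⟩)⟩
  · rintro ⟨h1, h2⟩
    refine ⟨h1, fun t ht => ?_⟩
    have := Finset.mem_Icc.mp ht
    exact h2 t (by omega) (by omega)

theorem claimA {n : ℕ} {ℓ : ℕ → ℕ} (hD : IsDyckPath n ℓ) {j : ℕ} (hj : j ≤ n) :
    ℓ (2 * j) = 2 * (sfin ℓ j).card := by
  have hpar : ℓ (2 * j) % 2 = 0 := by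
    have := parity hD (2 * j) (by omega)
    omega
  have hcard : (sfin ℓ j).card = (Finset.range (ℓ (2 * j) / 2)).card := by
    apply Finset.card_bij (i := fun i _ => ℓ (2 * i) / 2)
    · intro a ha
      rw [mem_sfin] at ha
      have h1 : ℓ (2 * a) < ℓ (2 * j) := ha.2 (2 * j) (by omega) le_rfl
      have h2 : ℓ (2 * a) % 2 = 0 := by
        have := parity hD (2 * a) (by omega)
        omega
      rw [Finset.mem_range]
      omega
    · intro a1 ha1 a2 ha2 heq
      rw [mem_sfin] at ha1 ha2
      by_contra hne
      have hp1 : ℓ (2 * a1) % 2 = 0 := by have := parity hD (2 * a1) (by omega); omega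
      have hp2 : ℓ (2 * a2) % 2 = 0 := by have := parity hD (2 * a2) (by omega); omega
      rcases lt_trichotomy a1 a2 with h | h | h
      · have := ha1.2 (2 * a2) (by omega) (by omega)
        omega
      · exact hne h
      · have := ha2.2 (2 * a1) (by omega) (by omega)
        omega
    · intro v hv
      rw [Finset.mem_range] at hv
      have h2v : 2 * v < ℓ (2 * j) := by omega
      obtain ⟨t, ht1, ht2, ht3⟩ := lastEq hD (b := 2 * j) (by omega) h2v
      have hte : t % 2 = 0 := by
        have := parity hD t (by omega)
        omega
      refine ⟨t / 2, ?_, ?_⟩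
      · rw [mem_sfin]
        constructor
        · omega
        · intro s hs1 hs2
          have e : 2 * (t / 2) = t := by omega
          rw [e] at hs1 ⊢
          rw [ht2]
          exact ht3 s hs1 hs2
      · have e : 2 * (t / 2) = t := by omega
        rw [e, ht2]
        omega
  rw [hcard, Finset.card_range]
  omega

/-! ### Translation between the path relation and the partition relation -/

theorem blockRel_phi {n : ℕ} {ℓ : ℕ → ℕ} (hn : 0 < n) {i k : ℕ} :
    blockRel (dyckEvenClasses n ℓ) i k ↔ i < n ∧ k < n ∧ DyckRel n ℓ (2 * i) (2 * k) := by
  constructor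
  · rintro ⟨B, ⟨m, hm, rfl⟩, ⟨hi1, hi2⟩, ⟨hk1, hk2⟩⟩
    exact ⟨hi1, hk1, dyckRel_trans hi2 (dyckRel_symm hk2)⟩
  · rintro ⟨hi, hk, hrel⟩
    exact ⟨{x | x < n ∧ DyckRel n ℓ (2 * x) (2 * i)}, ⟨i, hi, rfl⟩,
      ⟨hi, dyckRel_refl (by omega)⟩, ⟨hk, dyckRel_symm hrel⟩⟩

theorem rel_zero {n : ℕ} {ℓ : ℕ → ℕ} (hD : IsDyckPath n ℓ) (hn : 0 < n) {i : ℕ}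
    (hi : i < n) (h0 : ℓ (2 * i) = 0) : blockRel (dyckEvenClasses n ℓ) i 0 := by
  rw [blockRel_phi hn]
  refine ⟨hi, hn, by omega, by omega, by rw [h0, show 2 * 0 = 0 by rfl, hD.1],
    fun k hk1 hk2 => by rw [h0]; omega⟩

theorem rel_later {n : ℕ} {ℓ : ℕ → ℕ} (hD : IsDyckPath n ℓ) (hn : 0 < n) {i : ℕ}
    (hi : i < n) (h0 : 0 < ℓ (2 * i)) (hup : ℓ (2 * i + 1) = ℓ (2 * i) + 1) :
    ∃ k, i < k ∧ k < n ∧ blockRel (dyckEvenClasses n ℓ) i k ∧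
      ∀ s, 2 * i < s → s < 2 * k → ℓ (2 * i) < ℓ s := by
  obtain ⟨t, ht1, ht2, ht3, ht4⟩ := firstReturn hD rfl hup (by omega)
  have htlt : t < 2 * n := by
    rcases eq_or_lt_of_le ht2 with h | h
    · exfalso
      have := hD.2.1 (2 * n) le_rfl
      rw [← h] at this
      omega
    · exact h
  have hte : t % 2 = 0 := by
    have p1 := parity hD t ht2
    have p2 := parity hD (2 * i) (by omega)
    omega
  have he : 2 * (t / 2) = t := by omega
  refine ⟨t / 2, by omega, by omega, ?_, ?_⟩
  · rw [blockRel_phi hn]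
    refine ⟨hi, by omega, by omega, by omega, by rw [he, ht3], fun s hs1 hs2 => ?_⟩
    rw [he] at hs2
    have hb1 : 2 * i ≤ s := by omega
    have hb2 : s ≤ t := by omega
    rcases eq_or_lt_of_le hb1 with h | h
    · rw [← h]
    · rcases eq_or_lt_of_le hb2 with h' | h'
      · rw [h', ht3]
      · exact le_of_lt (ht4 s h h')
  · intro s hs1 hs2
    rw [he] at hs2
    exact ht4 s hs1 hs2

theorem sfin_eq_openSet {n : ℕ} {ℓ : ℕ → ℕ} (hD : IsDyckPath n ℓ) (hn : 0 < n) {j : ℕ}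
    (hj : j < n) : sfin ℓ j = openSet n (dyckEvenClasses n ℓ) j := by
  ext i
  rw [mem_sfin, mem_openSet]
  constructor
  · rintro ⟨hij, hstrict⟩
    refine ⟨hij, ?_⟩
    have hnorel : ∀ k, i < k → k ≤ j → ¬ blockRel (dyckEvenClasses n ℓ) i k := by
      intro k hk1 hk2 hrel
      rw [blockRel_phi hn] at hrel
      have hval := hrel.2.2.2.2.1
      have hs := hstrict (2 * k) (by omega) (by omega)
      omega
    rcases nxt_spec n (dyckEvenClasses n ℓ) i with ⟨u1, u2, u3, u4⟩ | ⟨u1, u2, u3⟩ | ⟨u1, u2, u3⟩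
    · by_contra hle
      exact hnorel _ u1 (by omega) u3
    · omega
    · exfalso
      by_cases h0 : ℓ (2 * i) = 0
      · exact u2 (rel_zero hD hn (by omega) h0)
      · have hup : ℓ (2 * i + 1) = ℓ (2 * i) + 1 := by
          have hs := hstrict (2 * i + 1) (by omega) (by omega)
          have hstep := hD.2.2 (2 * i) (by omega)
          omega
        obtain ⟨k, hk1, hk2, hk3, -⟩ := rel_later hD hn (by omega) (by omega) hup
        exact u3 k hk1 hk2 hk3
  · rintro ⟨hij, hnxt⟩
    refine ⟨hij, ?_⟩
    intro t ht1 ht2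
    rcases nxt_spec n (dyckEvenClasses n ℓ) i with ⟨u1, u2, u3, u4⟩ | ⟨u1, u2, u3⟩ | ⟨u1, u2, u3⟩
    · rw [blockRel_phi hn] at u3
      obtain ⟨-, -, hrel⟩ := u3
      have hge : ℓ (2 * i) ≤ ℓ t := hrel.2.2.2 t (by omega) (by omega)
      rcases eq_or_lt_of_le hge with he | h
      · exfalso
        have hte : t % 2 = 0 := by
          have p1 := parity hD t (by omega)
          have p2 := parity hD (2 * i) (by omega)
          omega
        apply u4 (t / 2) (by omega) (by omega)
        rw [blockRel_phi hn]
        refine ⟨by omega, by omega, by omega, by omega, ?_, fun s hs1 hs2 => ?_⟩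
        · rw [show 2 * (t / 2) = t by omega]; omega
        · exact hrel.2.2.2 s (by omega) (by omega)
      · exact h
    · rw [blockRel_phi hn] at u2
      have h0 : ℓ (2 * i) = 0 := by
        have := u2.2.2.2.2.1
        rw [show 2 * 0 = 0 by rfl, hD.1] at this
        exact this
      rcases Nat.eq_zero_or_pos (ℓ t) with hz | hp
      · exfalso
        have hte : t % 2 = 0 := by
          have p1 := parity hD t (by omega)
          omega
        apply u3 (t / 2) (by omega) (by omega)
        rw [blockRel_phi hn]
        refine ⟨by omega, by omega, by omega, by omega, ?_, fun s hs1 hs2 => by rw [h0]; omega⟩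
        rw [show 2 * (t / 2) = t by omega]
        omega
      · omega
    · omega

theorem nxt_phi_up_iff {n : ℕ} {ℓ : ℕ → ℕ} (hD : IsDyckPath n ℓ) (hn : 0 < n) {j : ℕ}
    (hj : j < n) :
    j < nxt n (dyckEvenClasses n ℓ) j ↔ ℓ (2 * j + 1) = ℓ (2 * j) + 1 := by
  have hstep := hD.2.2 (2 * j) (by omega)
  constructor
  · intro h
    rcases nxt_spec n (dyckEvenClasses n ℓ) j with ⟨u1, u2, u3, u4⟩ | ⟨u1, u2, u3⟩ | ⟨u1, u2, u3⟩
    · rw [blockRel_phi hn] at u3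
      have hge : ℓ (2 * j) ≤ ℓ (2 * j + 1) := u3.2.2.2.2.2 (2 * j + 1) (by omega) (by omega)
      omega
    · rw [blockRel_phi hn] at u2
      have h0 : ℓ (2 * j) = 0 := by
        have := u2.2.2.2.2.1
        rw [show 2 * 0 = 0 by rfl, hD.1] at this
        exact this
      omega
    · omega
  · intro h
    rcases nxt_spec n (dyckEvenClasses n ℓ) j with ⟨u1, u2, u3, u4⟩ | ⟨u1, u2, u3⟩ | ⟨u1, u2, u3⟩
    · exact u1
    · omega
    · exfalso
      by_cases h0 : ℓ (2 * j) = 0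
      · exact u2 (rel_zero hD hn hj h0)
      · obtain ⟨k, hk1, hk2, hk3, -⟩ := rel_later hD hn hj (by omega) h
        exact u3 k hk1 hk2 hk3

theorem F_phi_even {n : ℕ} {ℓ : ℕ → ℕ} (hD : IsDyckPath n ℓ) (hn : 0 < n) {j : ℕ}
    (hj : j < n) : 2 * cnt n (dyckEvenClasses n ℓ) j = ℓ (2 * j) := by
  unfold cnt
  rw [← sfin_eq_openSet hD hn hj]
  exact (claimA hD (le_of_lt hj)).symm

theorem F_phi {n : ℕ} {ℓ : ℕ → ℕ} (hD : IsDyckPath n ℓ) (hn : 0 < n) :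
    F n (dyckEvenClasses n ℓ) = ℓ := by
  funext t
  by_cases ht : 2 * n ≤ t
  · rw [F_top ht, hD.2.1 t ht]
  · push_neg at ht
    by_cases hte : t % 2 = 0
    · have hjn : t / 2 < n := by omega
      rw [show t = 2 * (t / 2) by omega, F_even hjn, F_phi_even hD hn hjn]
    · have hjn : t / 2 < n := by omega
      have heq : 2 * cnt n (dyckEvenClasses n ℓ) (t / 2) = ℓ (2 * (t / 2)) :=
        F_phi_even hD hn hjn
      have hstep := hD.2.2 (2 * (t / 2)) (by omega)
      by_cases hup : t / 2 < nxt n (dyckEvenClasses n ℓ) (t / 2)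
      · have := (nxt_phi_up_iff hD hn hjn).mp hup
        rw [show t = 2 * (t / 2) + 1 by omega, F_odd_up hjn hup]
        omega
      · have hne := hup ∘ (nxt_phi_up_iff hD hn hjn).mpr
        rw [show t = 2 * (t / 2) + 1 by omega, F_odd_down hjn hup]
        have : ℓ (2 * (t / 2)) = ℓ (2 * (t / 2) + 1) + 1 := by
          rcases hstep with h | h
          · exact absurd h hne
          · exact h
        omega

/-! ### Properties of `nxt` and `cnt` for a noncrossing partition -/

theorem nxt_case1 {n : ℕ} {P : Set (Set ℕ)} {i : ℕ} (h1 : i < nxt n P i)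
    (h2 : nxt n P i < n) :
    blockRel P i (nxt n P i) ∧ ∀ k, i < k → k < nxt n P i → ¬blockRel P i k := by
  rcases nxt_spec n P i with ⟨u1, u2, u3, u4⟩ | ⟨u1, u2, u3⟩ | ⟨u1, u2, u3⟩
  · exact ⟨u3, u4⟩
  · omega
  · omega

theorem nxt_eq_rel {n : ℕ} {P : Set (Set ℕ)} {x v : ℕ} (h1 : x < v) (hv : v < n)
    (h : nxt n P x = v) :
    blockRel P x v ∧ ∀ k, x < k → k < v → ¬blockRel P x k := by
  have c := nxt_case1 (n := n) (P := P) (i := x) (by omega) (by omega)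
  rw [h] at c
  exact c

theorem cnt_pos {n : ℕ} {P : Set (Set ℕ)} (hP : IsPartitionOf n P) (hn : 0 < n) {j : ℕ}
    (hj : j < n) (h0 : ¬ blockRel P j 0) : 1 ≤ cnt n P j := by
  classical
  have hj0 : j ≠ 0 := by rintro rfl; exact h0 (blockRel_refl hP hn)
  have hP0 : blockRel P 0 0 := blockRel_refl hP hn
  set m := Nat.findGreatest (P := fun i => blockRel P 0 i) j with hm
  have hspec : blockRel P 0 m :=
    Nat.findGreatest_spec (P := fun i => blockRel P 0 i) (Nat.zero_le j) hP0
  have hmle : m ≤ j := Nat.findGreatest_le (P := fun i => blockRel P 0 i) j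
  have hmj : m ≠ j := by
    intro h; rw [h] at hspec; exact h0 (blockRel_symm hspec)
  have hgr : ∀ s, m < s → s ≤ j → ¬ blockRel P 0 s := fun s hs hsb =>
    Nat.findGreatest_is_greatest (P := fun i => blockRel P 0 i) hs hsb
  have hnxt : j < nxt n P m := by
    rcases nxt_spec n P m with ⟨u1, u2, u3, u4⟩ | ⟨u1, u2, u3⟩ | ⟨u1, u2, u3⟩
    · by_contra hle
      exact hgr (nxt n P m) u1 (by omega) (blockRel_trans hP hspec u3)
    · omega
    · exact absurd (blockRel_symm hspec) u2
  have hmem : m ∈ openSet n P j := mem_openSet.mpr ⟨by omega, hnxt⟩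
  exact Finset.card_pos.mpr ⟨m, hmem⟩

theorem openSet_nxt_eq {n : ℕ} {P : Set (Set ℕ)} (hP : IsPartitionOf n P)
    (hNC : IsNoncrossing P) {i : ℕ} (h1 : i < nxt n P i) (h2 : nxt n P i < n) :
    openSet n P (nxt n P i) = openSet n P i := by
  obtain ⟨hrel, hleast⟩ := nxt_case1 h1 h2
  ext k
  rw [mem_openSet, mem_openSet]
  constructor
  · rintro ⟨hk1, hk2⟩
    have hki : k < i := by
      rcases lt_trichotomy k i with h | h | h
      · exact h
      · exfalso; rw [h] at hk2; omega
      · exfalso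
        rcases nxt_spec n P k with ⟨u1, u2, u3, u4⟩ | ⟨u1, u2, u3⟩ | ⟨u1, u2, u3⟩
        · exact hleast k h hk1 (cross hP hNC h hk1 hk2 hrel u3)
        · rcases Nat.eq_zero_or_pos i with rfl | hpos
          · exact hleast k h hk1 (blockRel_symm u2)
          · have h0i : blockRel P 0 i := cross hP hNC hpos h hk1 (blockRel_symm u2) hrel
            exact hleast k h hk1 (blockRel_trans hP (blockRel_symm h0i) (blockRel_symm u2))
        · omega
    exact ⟨hki, by omega⟩
  · rintro ⟨hk1, hk2⟩
    refine ⟨by omega, ?_⟩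
    by_contra hle
    push_neg at hle
    rcases nxt_spec n P k with ⟨u1, u2, u3, u4⟩ | ⟨u1, u2, u3⟩ | ⟨u1, u2, u3⟩
    · have hbki : blockRel P k i := by
        rcases eq_or_lt_of_le hle with he | hlt
        · exact blockRel_trans hP (he ▸ u3) (blockRel_symm hrel)
        · exact cross hP hNC hk1 hk2 hlt u3 hrel
      exact u4 i hk1 hk2 hbki
    · omega
    · omega

theorem cnt_lt {n : ℕ} {P : Set (Set ℕ)} (hP : IsPartitionOf n P) (hNC : IsNoncrossing P)
    {i m j : ℕ} (him : i < m) (hmj : m ≤ j) (hjn : j < n) (hnxt : j < nxt n P i) :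
    cnt n P i < cnt n P m := by
  have hsub : insert i (openSet n P i) ⊆ openSet n P m := by
    intro k hk
    rcases Finset.mem_insert.mp hk with rfl | hk
    · exact mem_openSet.mpr ⟨him, by omega⟩
    · rw [mem_openSet] at hk
      obtain ⟨hk1, hk2⟩ := hk
      refine mem_openSet.mpr ⟨by omega, ?_⟩
      by_contra hle
      push_neg at hle
      rcases nxt_spec n P k with ⟨u1, u2, u3, u4⟩ | ⟨u1, u2, u3⟩ | ⟨u1, u2, u3⟩
      · have hbki : blockRel P k i := by
          rcases nxt_spec n P i with ⟨v1, v2, v3, v4⟩ | ⟨v1, v2, v3⟩ | ⟨v1, v2, v3⟩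
          · exact cross hP hNC hk1 hk2 (by omega) u3 v3
          · rcases Nat.eq_zero_or_pos k with rfl | hkpos
            · exact blockRel_symm v2
            · have h0k : blockRel P 0 k := cross hP hNC hkpos hk1 hk2 (blockRel_symm v2) u3
              exact blockRel_trans hP (blockRel_symm h0k) (blockRel_symm v2)
          · omega
        exact u4 i hk1 hk2 hbki
      · omega
      · omega
  have hnotmem : i ∉ openSet n P i := by
    rw [mem_openSet]; omega
  have hcard := Finset.card_le_card hsub
  rw [Finset.card_insert_of_notMem hnotmem] at hcard
  unfold cnt
  omega

theorem strict_above {n : ℕ} {P : Set (Set ℕ)} (hP : IsPartitionOf n P)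
    (hNC : IsNoncrossing P) {i j : ℕ} (hij : i < j) (hjn : j < n) (hnxt : j < nxt n P i) :
    ∀ t, 2 * i < t → t ≤ 2 * j → F n P (2 * i) < F n P t := by
  intro t ht1 ht2
  have hin : i < n := by omega
  rw [F_even hin]
  by_cases hte : t % 2 = 0
  · have him : i < t / 2 := by omega
    have hm : t / 2 ≤ j := by omega
    rw [show t = 2 * (t / 2) by omega, F_even (show t / 2 < n by omega)]
    have := cnt_lt hP hNC him hm hjn hnxt
    omega
  · have hmj : t / 2 < j := by omega
    have hmi : i ≤ t / 2 := by omega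
    rcases eq_or_lt_of_le hmi with he | hlt
    · have hu : i < nxt n P i := by omega
      rw [show t = 2 * i + 1 by omega, F_odd_up hin hu]
      omega
    · have hc := cnt_lt hP hNC hlt (le_of_lt hmj) hjn hnxt
      rw [show t = 2 * (t / 2) + 1 by omega]
      by_cases hu : t / 2 < nxt n P (t / 2)
      · rw [F_odd_up (by omega) hu]; omega
      · rw [F_odd_down (by omega) hu]; omega

theorem F_dead {n : ℕ} {P : Set (Set ℕ)} (hP : IsPartitionOf n P) (hn : 0 < n) {i : ℕ}
    (hin : i < n) (h : ¬ i < nxt n P i) : F n P (2 * i + 1) < F n P (2 * i) := by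
  have h0 : ¬ blockRel P i 0 := by
    rcases nxt_spec n P i with ⟨u1, u2, u3, u4⟩ | ⟨u1, u2, u3⟩ | ⟨u1, u2, u3⟩
    · omega
    · omega
    · exact u2
  have hc := cnt_pos hP hn hin h0
  rw [F_odd_down hin h, F_even hin]
  omega

/-! ### The path relation of `F P` is the block relation -/

theorem blockRel_of_dyckRel {n : ℕ} {P : Set (Set ℕ)} (hP : IsPartitionOf n P)
    (hNC : IsNoncrossing P) (hn : 0 < n) :
    ∀ d i j, i < j → j < n → j - i ≤ d → DyckRel n (F n P) (2 * i) (2 * j) →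
      blockRel P i j := by
  intro d
  induction d with
  | zero => intro i j h1 _ h2 _; omega
  | succ d ih =>
    intro i j hij hjn hd hrel
    have hFeq : F n P (2 * i) = F n P (2 * j) := hrel.2.2.1
    have hmono := hrel.2.2.2
    have hne : ({k | i < k ∧ k ≤ j ∧ F n P (2 * k) = F n P (2 * i)} : Set ℕ).Nonempty :=
      ⟨j, hij, le_rfl, hFeq.symm⟩
    obtain ⟨hm1, hm2, hm3⟩ := Nat.sInf_mem hne
    set m := sInf {k | i < k ∧ k ≤ j ∧ F n P (2 * k) = F n P (2 * i)} with hmdef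
    have hni1 : i < nxt n P i := by
      by_contra hc
      have hdead := F_dead hP hn (by omega) hc
      have hge : F n P (2 * i) ≤ F n P (2 * i + 1) := hmono (2 * i + 1) (by omega) (by omega)
      omega
    have hni2 : ¬ (m < nxt n P i) := by
      intro hgt
      have := strict_above hP hNC (show i < m from hm1) (by omega) hgt (2 * m)
        (by omega) le_rfl
      omega
    have hni3 : ¬ (nxt n P i < m) := by
      intro hlt
      have h2n : nxt n P i < n := by omega
      have hce : cnt n P (nxt n P i) = cnt n P i := by
        unfold cnt; rw [openSet_nxt_eq hP hNC hni1 h2n]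
      have hFe : F n P (2 * nxt n P i) = F n P (2 * i) := by
        rw [F_even h2n, F_even (show i < n by omega), hce]
      exact Nat.notMem_of_lt_sInf hlt ⟨hni1, by omega, hFe⟩
    have hnm : nxt n P i = m := by omega
    have hrelim : blockRel P i m := by
      have hc := (nxt_case1 hni1 (by omega)).1
      rw [hnm] at hc
      exact hc
    rcases eq_or_lt_of_le hm2 with he | hlt
    · rw [← he]; exact hrelim
    · have hrel2 : DyckRel n (F n P) (2 * m) (2 * j) := by
        refine ⟨by omega, by omega, by rw [hm3, hFeq], fun k hk1 hk2 => ?_⟩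
        rw [hm3]
        exact hmono k (by omega) (by omega)
      exact blockRel_trans hP hrelim (ih m j hlt hjn (by omega) hrel2)

theorem dyckRel_of_blockRel {n : ℕ} {P : Set (Set ℕ)} (hP : IsPartitionOf n P)
    (hNC : IsNoncrossing P) (hn : 0 < n) :
    ∀ d i j, i ≤ j → j < n → j - i ≤ d → blockRel P i j →
      DyckRel n (F n P) (2 * i) (2 * j) := by
  intro d
  induction d with
  | zero =>
    intro i j h1 hjn h2 _
    have he : i = j := by omega
    rw [he]; exact dyckRel_refl (by omega)
  | succ d ih =>
    intro i j hij hjn hd hrel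
    rcases eq_or_lt_of_le hij with he | hij'
    · rw [he]; exact dyckRel_refl (by omega)
    · have hcase : i < nxt n P i ∧ nxt n P i < n := by
        rcases nxt_spec n P i with ⟨u1, u2, u3, u4⟩ | ⟨u1, u2, u3⟩ | ⟨u1, u2, u3⟩
        · exact ⟨u1, u2⟩
        · exact absurd hrel (u3 j hij' hjn)
        · exact absurd hrel (u3 j hij' hjn)
      obtain ⟨hc1, hc2⟩ := hcase
      obtain ⟨hbrel, hleast⟩ := nxt_case1 hc1 hc2
      have hi'j : nxt n P i ≤ j := by
        by_contra hgt
        exact hleast j hij' (by omega) hrel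
      have hceq : cnt n P (nxt n P i) = cnt n P i := by
        unfold cnt; rw [openSet_nxt_eq hP hNC hc1 hc2]
      have hstep1 : DyckRel n (F n P) (2 * i) (2 * nxt n P i) := by
        refine ⟨by omega, by omega, ?_, fun k hk1 hk2 => ?_⟩
        · rw [F_even (show i < n by omega), F_even hc2, hceq]
        · have hk1' : 2 * i ≤ k := by omega
          have hk2' : k ≤ 2 * nxt n P i := by omega
          rcases eq_or_lt_of_le hk1' with he1 | h1'
          · rw [← he1]
          · rcases eq_or_lt_of_le hk2' with he2 | h2'
            · rw [he2, F_even (show i < n by omega), F_even hc2, hceq]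
            · by_cases hke : k % 2 = 0
              · have := strict_above hP hNC (show i < k / 2 by omega)
                  (show k / 2 < n by omega) (show k / 2 < nxt n P i by omega)
                  k (by omega) (by omega)
                exact le_of_lt this
              · rcases eq_or_lt_of_le (show i ≤ k / 2 by omega) with hm | hm
                · have hkk : k = 2 * i + 1 := by omega
                  rw [hkk, F_odd_up (show i < n by omega) hc1,
                    F_even (show i < n by omega)]
                  omega
                · have hmlt : k / 2 < nxt n P i := by omega
                  have hcm := cnt_lt hP hNC hm (show k / 2 ≤ nxt n P i - 1 by omega)
                    (show nxt n P i - 1 < n by omega) (show nxt n P i - 1 < nxt n P i by omega)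
                  rw [show k = 2 * (k / 2) + 1 by omega, F_even (show i < n by omega)]
                  by_cases hu : k / 2 < nxt n P (k / 2)
                  · rw [F_odd_up (by omega) hu]; omega
                  · rw [F_odd_down (by omega) hu]; omega
      have hbrel' : blockRel P (nxt n P i) j := blockRel_trans hP (blockRel_symm hbrel) hrel
      rcases eq_or_lt_of_le hi'j with he' | hlt'
      · rw [← he']; exact hstep1
      · exact dyckRel_trans hstep1 (ih (nxt n P i) j (le_of_lt hlt') hjn (by omega) hbrel')

theorem dyckRel_iff_blockRel {n : ℕ} {P : Set (Set ℕ)} (hP : IsPartitionOf n P)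
    (hNC : IsNoncrossing P) (hn : 0 < n) {i j : ℕ} (hi : i < n) (hj : j < n) :
    DyckRel n (F n P) (2 * i) (2 * j) ↔ blockRel P i j := by
  constructor
  · intro h
    rcases lt_trichotomy i j with hlt | he | hgt
    · exact blockRel_of_dyckRel hP hNC hn (j - i) i j hlt hj le_rfl h
    · rw [he]; exact blockRel_refl hP hj
    · exact blockRel_symm
        (blockRel_of_dyckRel hP hNC hn (i - j) j i hgt hi le_rfl (dyckRel_symm h))
  · intro h
    rcases le_or_gt i j with hle | hgt
    · exact dyckRel_of_blockRel hP hNC hn (j - i) i j hle hj le_rfl h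
    · exact dyckRel_symm
        (dyckRel_of_blockRel hP hNC hn (i - j) j i (le_of_lt hgt) hi le_rfl (blockRel_symm h))

/-! ### `F P` is a Dyck path -/

theorem cnt_zero {n : ℕ} {P : Set (Set ℕ)} : cnt n P 0 = 0 := by
  unfold cnt openSet
  simp

theorem openSet_succ {n : ℕ} {P : Set (Set ℕ)} {j : ℕ} (hjn : j + 1 < n) :
    openSet n P (j + 1) = (openSet n P j).filter (fun i => j + 1 < nxt n P i) ∪
      (if j + 1 < nxt n P j then {j} else ∅) := by
  ext k
  rw [Finset.mem_union, Finset.mem_filter, mem_openSet]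
  constructor
  · rintro ⟨hk1, hk2⟩
    rcases lt_trichotomy k j with h | h | h
    · left; exact ⟨mem_openSet.mpr ⟨h, by omega⟩, hk2⟩
    · right
      have hc : j + 1 < nxt n P j := h ▸ hk2
      rw [if_pos hc]
      exact Finset.mem_singleton.mpr h
    · omega
  · rintro (⟨h1, h3⟩ | hmem)
    · rw [mem_openSet] at h1
      exact ⟨by omega, h3⟩
    · by_cases hc : j + 1 < nxt n P j
      · rw [if_pos hc] at hmem
        have hkj : k = j := Finset.mem_singleton.mp hmem
        exact ⟨by omega, by rw [hkj]; exact hc⟩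
      · rw [if_neg hc] at hmem
        exact absurd hmem (Finset.notMem_empty k)

theorem pred_card_le_one {n : ℕ} {P : Set (Set ℕ)} (hP : IsPartitionOf n P) {j : ℕ}
    (hjn : j + 1 < n) :
    ((openSet n P j).filter (fun i => ¬ j + 1 < nxt n P i)).card ≤ 1 := by
  rw [Finset.card_le_one]
  intro x hx y hy
  rw [Finset.mem_filter, mem_openSet] at hx hy
  obtain ⟨⟨hx1, hx2⟩, hx3⟩ := hx
  obtain ⟨⟨hy1, hy2⟩, hy3⟩ := hy
  obtain ⟨cx1, cx2⟩ := nxt_eq_rel (n := n) (P := P) (show x < j + 1 by omega) hjn (by omega)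
  obtain ⟨cy1, cy2⟩ := nxt_eq_rel (n := n) (P := P) (show y < j + 1 by omega) hjn (by omega)
  by_contra hne
  rcases lt_trichotomy x y with h | h | h
  · exact cx2 y h (by omega) (blockRel_trans hP cx1 (blockRel_symm cy1))
  · exact hne h
  · exact cy2 x h (by omega) (blockRel_trans hP cy1 (blockRel_symm cx1))

theorem F_isDyck {n : ℕ} {P : Set (Set ℕ)} (hP : IsPartitionOf n P) (hNC : IsNoncrossing P)
    (hn : 0 < n) : IsDyckPath n (F n P) := by
  refine ⟨?_, fun j hj => F_top hj, fun k hk => ?_⟩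
  · have h0 : F n P (2 * 0) = 2 * cnt n P 0 := F_even hn
    rw [mul_zero, cnt_zero, mul_zero] at h0
    exact h0
  · by_cases hke : k % 2 = 0
    · -- step from an even time
      have hjn : k / 2 < n := by omega
      have hkeq : k = 2 * (k / 2) := by omega
      by_cases hup : k / 2 < nxt n P (k / 2)
      · left
        rw [hkeq, show 2 * (k / 2) + 1 = 2 * (k / 2) + 1 from rfl,
          F_odd_up hjn hup, F_even hjn]
      · right
        have h0 : ¬ blockRel P (k / 2) 0 := by
          rcases nxt_spec n P (k / 2) with ⟨u1, u2, u3, u4⟩ | ⟨u1, u2, u3⟩ | ⟨u1, u2, u3⟩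
          · omega
          · omega
          · exact u2
        have hc := cnt_pos hP hn hjn h0
        rw [hkeq, F_odd_down hjn hup, F_even hjn]
        omega
    · -- step from an odd time
      classical
      have hjn : k / 2 < n := by omega
      have hkeq : k = 2 * (k / 2) + 1 := by omega
      set j := k / 2 with hjdef
      by_cases hj1 : j + 1 < n
      · have hsplit := openSet_succ (n := n) (P := P) (j := j) hj1
        have hone := pred_card_le_one hP (j := j) hj1
        have hfilter := Finset.card_filter_add_card_filter_not
          (s := openSet n P j) (p := fun i => j + 1 < nxt n P i)
        have hdisj : Disjoint ((openSet n P j).filter (fun i => j + 1 < nxt n P i))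
            (if j + 1 < nxt n P j then ({j} : Finset ℕ) else ∅) := by
          by_cases hc : j + 1 < nxt n P j
          · rw [if_pos hc]
            rw [Finset.disjoint_singleton_right, Finset.mem_filter, mem_openSet]
            omega
          · rw [if_neg hc]; exact Finset.disjoint_empty_right _
        have hcnt1 : cnt n P (j + 1) =
            ((openSet n P j).filter (fun i => j + 1 < nxt n P i)).card
              + (if j + 1 < nxt n P j then 1 else 0) := by
          unfold cnt
          rw [hsplit, Finset.card_union_of_disjoint hdisj]
          congr 1
          by_cases hc : j + 1 < nxt n P j
          · rw [if_pos hc, if_pos hc]; rfl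
          · rw [if_neg hc, if_neg hc]; rfl
        have hcnteq : cnt n P j = (openSet n P j).card := rfl
        by_cases hup : j < nxt n P j
        · rcases eq_or_lt_of_le (show j + 1 ≤ nxt n P j by omega) with he | hgt
          · -- nxt j = j + 1 : no predecessors die
            have hnone : (openSet n P j).filter (fun i => ¬ j + 1 < nxt n P i) = ∅ := by
              rw [Finset.filter_eq_empty_iff]
              intro x hx hneg
              rw [mem_openSet] at hx
              obtain ⟨c1, c2⟩ := nxt_eq_rel (n := n) (P := P) (show x < j + 1 by omega)
                hj1 (by omega)
              obtain ⟨d1, d2⟩ := nxt_eq_rel (n := n) (P := P) (show j < j + 1 by omega)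
                hj1 (by omega)
              exact c2 j hx.1 (by omega) (blockRel_trans hP c1 (blockRel_symm d1))
            rw [hnone] at hfilter
            rw [if_neg (by omega)] at hcnt1
            right
            rw [hkeq, show 2 * j + 1 + 1 = 2 * (j + 1) by ring, F_odd_up hjn hup,
              F_even hj1]
            simp only [Finset.card_empty] at hfilter
            omega
          · rw [if_pos hgt] at hcnt1
            rw [hkeq, show 2 * j + 1 + 1 = 2 * (j + 1) by ring, F_odd_up hjn hup,
              F_even hj1]
            omega
        · -- down step at the odd time
          have h0 : ¬ blockRel P j 0 := by
            rcases nxt_spec n P j with ⟨u1, u2, u3, u4⟩ | ⟨u1, u2, u3⟩ | ⟨u1, u2, u3⟩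
            · omega
            · omega
            · exact u2
          have hc := cnt_pos hP hn hjn h0
          rw [if_neg (by omega)] at hcnt1
          rw [hkeq, show 2 * j + 1 + 1 = 2 * (j + 1) by ring, F_odd_down hjn hup,
            F_even hj1]
          omega
      · -- j = n - 1 : final descent
        have hj1' : j + 1 = n := by omega
        have hF2n : F n P (k + 1) = 0 := F_top (by omega)
        rcases nxt_spec n P j with ⟨u1, u2, u3, u4⟩ | ⟨u1, u2, u3⟩ | ⟨u1, u2, u3⟩
        · omega
        · -- last block is the block of 0 : cnt j = 0, up step to 1
          have hc0 : cnt n P j = 0 := by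
            unfold cnt
            rw [Finset.card_eq_zero, Finset.eq_empty_iff_forall_notMem]
            intro x hx
            rw [mem_openSet] at hx
            obtain ⟨hx1, hx2⟩ := hx
            rcases nxt_spec n P x with ⟨v1, v2, v3, v4⟩ | ⟨v1, v2, v3⟩ | ⟨v1, v2, v3⟩
            · omega
            · exact v3 j (by omega) hjn (blockRel_trans hP v2 (blockRel_symm u2))
            · omega
          right
          rw [hkeq, F_odd_up hjn (by omega), hc0]
          rw [show 2 * j + 1 + 1 = k + 1 by omega, hF2n]
        · -- last block is not the block of 0 : cnt j = 1, down step to 1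
          have hP0 : blockRel P 0 0 := blockRel_refl hP hn
          set m := Nat.findGreatest (P := fun i => blockRel P 0 i) j with hm
          have hspec : blockRel P 0 m :=
            Nat.findGreatest_spec (P := fun i => blockRel P 0 i) (Nat.zero_le j) hP0
          have hmle : m ≤ j := Nat.findGreatest_le (P := fun i => blockRel P 0 i) j
          have hmj : m ≠ j := fun h => u2 (blockRel_symm (h ▸ hspec))
          have hgr : ∀ s, m < s → s ≤ j → ¬ blockRel P 0 s := fun s hs hsb =>
            Nat.findGreatest_is_greatest (P := fun i => blockRel P 0 i) hs hsb
          have hnxtm : j < nxt n P m := by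
            rcases nxt_spec n P m with ⟨v1, v2, v3, v4⟩ | ⟨v1, v2, v3⟩ | ⟨v1, v2, v3⟩
            · by_contra hle
              exact hgr (nxt n P m) v1 (by omega) (blockRel_trans hP hspec v3)
            · omega
            · exact absurd (blockRel_symm hspec) v2
          have hone : openSet n P j = {m} := by
            ext x
            rw [mem_openSet, Finset.mem_singleton]
            constructor
            · rintro ⟨hx1, hx2⟩
              rcases nxt_spec n P x with ⟨v1, v2, v3, v4⟩ | ⟨v1, v2, v3⟩ | ⟨v1, v2, v3⟩
              · omega
              · rcases lt_trichotomy x m with h | h | h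
                · exact absurd (blockRel_trans hP v2 hspec) (v3 m h (by omega))
                · exact h
                · exact absurd (blockRel_symm v2) (fun hh => hgr x h (by omega) hh)
              · omega
            · rintro rfl
              exact ⟨by omega, hnxtm⟩
          have hc1 : cnt n P j = 1 := by
            unfold cnt; rw [hone]; rfl
          right
          rw [hkeq, F_odd_down hjn (by omega), hc1]
          rw [show 2 * j + 1 + 1 = k + 1 by omega, hF2n]

/-! ### `Φ (F P) = P` -/

theorem class_eq_block {n : ℕ} {P : Set (Set ℕ)} (hP : IsPartitionOf n P)
    (hNC : IsNoncrossing P) (hn : 0 < n) {j : ℕ} {B : Set ℕ} (hj : j < n) (hB : B ∈ P)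
    (hjB : j ∈ B) : {i | i < n ∧ DyckRel n (F n P) (2 * i) (2 * j)} = B := by
  ext x
  simp only [Set.mem_setOf_eq]
  constructor
  · rintro ⟨hx, hr⟩
    obtain ⟨C, hC, hxC, hjC⟩ := (dyckRel_iff_blockRel hP hNC hn hx hj).mp hr
    obtain ⟨D, hD, hun⟩ := hP.2.2 j hj
    rw [show B = D from hun B ⟨hB, hjB⟩, ← show C = D from hun C ⟨hC, hjC⟩]
    exact hxC
  · intro hx
    have hxn : x < n := hP.2.1 B hB hx
    exact ⟨hxn, (dyckRel_iff_blockRel hP hNC hn hxn hj).mpr ⟨B, hB, hx, hjB⟩⟩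

theorem phi_F {n : ℕ} {P : Set (Set ℕ)} (hP : IsPartitionOf n P) (hNC : IsNoncrossing P)
    (hn : 0 < n) : dyckEvenClasses n (F n P) = P := by
  ext B
  constructor
  · rintro ⟨j, hj, rfl⟩
    obtain ⟨C, ⟨hC, hjC⟩, -⟩ := hP.2.2 j hj
    rw [class_eq_block hP hNC hn hj hC hjC]
    exact hC
  · intro hB
    obtain ⟨j, hjB⟩ := hP.1 B hB
    have hjn : j < n := hP.2.1 B hB hjB
    exact ⟨j, hjn, (class_eq_block hP hNC hn hjn hB hjB).symm⟩

end DyckNC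

/-- For every positive integer `n`, the map `ℓ ↦ Φ(ℓ)` is a bijection from
the set of `2n`-step Dyck paths onto the set of noncrossing partitions of `{0, 1, …, n-1}`. -/
theorem dyckEvenClasses_bijOn (n : ℕ) (hn : 0 < n) :
    Set.BijOn (dyckEvenClasses n) {ℓ | IsDyckPath n ℓ} {P | IsNCPartition n P} := by
  refine ⟨fun ℓ hℓ => DyckNC.phi_isNC hℓ hn, ?_, ?_⟩
  · intro ℓ₁ h₁ ℓ₂ h₂ heq
    calc ℓ₁ = DyckNC.F n (dyckEvenClasses n ℓ₁) := (DyckNC.F_phi h₁ hn).symm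
      _ = DyckNC.F n (dyckEvenClasses n ℓ₂) := by rw [heq]
      _ = ℓ₂ := DyckNC.F_phi h₂ hn
  · intro P hP
    exact ⟨DyckNC.F n P, DyckNC.F_isDyck hP.1 hP.2 hn, DyckNC.phi_F hP.1 hP.2 hn⟩
end

section
/- For every positive integer n and every 2n-step Dyck path ℓ: the equivalence classes of ∼_ℓ among the odd indices 1, 3, …, 2n−1, identifying index 2j+1 with j, form a noncrossing partition Ψ(ℓ) of {0, 1, …, n−1}; the set partition of {0, 1, …, 2n−1} whose blocks are the equivalence classes of ∼_ℓ among the even indices 0, 2, …, 2n−2 together with the equivalence classes of ∼_ℓ among the odd indices 1, 3, …, 2n−1 is a noncrossing partition of {0, 1, …, 2n−1}; and the map ℓ ↦ Ψ(ℓ) is a bijection from the set of 2n-step Dyck paths onto the set of noncrossing partitions of {0, 1, …, n−1}. -/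
namespace DyckAux

section Basic

variable {n : ℕ} {ℓ : ℕ → ℕ}

lemma relRefl {i : ℕ} (h : i ≤ 2*n) : DyckRel n ℓ i i := by
  refine ⟨h, h, rfl, fun k h1 h2 => ?_⟩
  simp only [min_self, max_self] at h1 h2
  have : k = i := le_antisymm h2 h1
  simp [this]

lemma relSymm {i j : ℕ} (h : DyckRel n ℓ i j) : DyckRel n ℓ j i := by
  obtain ⟨hi, hj, he, hm⟩ := h
  exact ⟨hj, hi, he.symm, fun k h1 h2 => he ▸ hm k (by omega) (by omega)⟩

lemma relTrans {i j k : ℕ} (h1 : DyckRel n ℓ i j) (h2 : DyckRel n ℓ j k) :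
    DyckRel n ℓ i k := by
  obtain ⟨hi, hj, he, hm⟩ := h1
  obtain ⟨_, hk, he', hm'⟩ := h2
  refine ⟨hi, hk, he.trans he', fun r hr1 hr2 => ?_⟩
  rcases (by omega : (min i j ≤ r ∧ r ≤ max i j) ∨ (min j k ≤ r ∧ r ≤ max j k)) with
    ⟨h, h'⟩ | ⟨h, h'⟩
  · exact hm r h h'
  · exact he ▸ hm' r h h'

lemma parity (hD : IsDyckPath n ℓ) : ∀ k, k ≤ 2*n → ℓ k % 2 = k % 2 := by
  intro k
  induction k with
  | zero => intro _; simp [hD.1]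
  | succ m ih =>
    intro hm
    have h1 := ih (by omega)
    rcases hD.2.2 m (by omega) with h | h <;> omega

/-- last time before `a` at level `c`. -/
lemma H1 (hD : IsDyckPath n ℓ) :
    ∀ a c, a ≤ 2*n → c < ℓ a →
    ∃ s < a, ℓ s = c ∧ ∀ t, s < t → t ≤ a → c < ℓ t := by
  intro a
  induction a with
  | zero => intro c _ hc; rw [hD.1] at hc; omega
  | succ b ih =>
    intro c hb hc
    by_cases hcb : c < ℓ b
    · obtain ⟨s, hs, he, hgt⟩ := ih c (by omega) hcb
      refine ⟨s, by omega, he, fun t h1 h2 => ?_⟩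
      rcases Nat.lt_or_ge t (b+1) with h | h
      · exact hgt t h1 (by omega)
      · have ht : t = b + 1 := by omega
        rw [ht]; exact hc
    · have hstep := hD.2.2 b (by omega)
      have : ℓ b = c := by omega
      refine ⟨b, by omega, this, fun t h1 h2 => ?_⟩
      have ht : t = b + 1 := by omega
      rw [ht]; exact hc

/-- first time after `a` at level `c`. -/
lemma H2 (hD : IsDyckPath n ℓ) :
    ∀ d a c, a + d = 2*n → c < ℓ a →
    ∃ s, a < s ∧ s ≤ 2*n ∧ ℓ s = c ∧ ∀ t, a ≤ t → t < s → c < ℓ t := by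
  intro d
  induction d with
  | zero =>
    intro a c ha hc
    have := hD.2.1 a (by omega)
    omega
  | succ e ih =>
    intro a c ha hc
    by_cases hca : c < ℓ (a+1)
    · obtain ⟨s, hs1, hs2, hs3, hgt⟩ := ih (a+1) c (by omega) hca
      refine ⟨s, by omega, hs2, hs3, fun t h1 h2 => ?_⟩
      rcases Nat.lt_or_ge t (a+1) with h | h
      · have ht : t = a := by omega
        rw [ht]; exact hc
      · exact hgt t h h2
    · have hstep := hD.2.2 a (by omega)
      have h1 : ℓ (a+1) = c := by omega
      refine ⟨a+1, by omega, by omega, h1, fun t h1 h2 => ?_⟩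
      have ht : t = a := by omega
      rw [ht]; exact hc

lemma oddpos (hD : IsDyckPath n ℓ) {i : ℕ} (hi : i < n) : ℓ (2*i+1) % 2 = 1 := by
  have := parity hD (2*i+1) (by omega)
  omega

lemma L1 (hD : IsDyckPath n ℓ) {i : ℕ} (hi : i < n) :
    (∃ j, j < i ∧ DyckRel n ℓ (2*j+1) (2*i+1)) ↔ ℓ (2*i) = ℓ (2*i+1) + 1 := by
  constructor
  · rintro ⟨j, hj, _, _, he, hm⟩
    have h1 : ℓ (2*j+1) ≤ ℓ (2*i) := hm (2*i) (by omega) (by omega)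
    have hstep := hD.2.2 (2*i) (by omega)
    omega
  · intro hdown
    obtain ⟨s, hs, he, hgt⟩ := H1 hD (2*i) (ℓ (2*i+1)) (by omega) (by omega)
    have hpar := parity hD s (by omega)
    have hpar2 := parity hD (2*i+1) (by omega)
    have hsodd : s % 2 = 1 := by omega
    obtain ⟨j, rfl⟩ : ∃ j, s = 2*j+1 := ⟨(s-1)/2, by omega⟩
    refine ⟨j, by omega, by omega, by omega, he, fun k h1 h2 => ?_⟩
    rw [he]
    rcases (by omega : k = 2*j+1 ∨ (2*j+1 < k ∧ k ≤ 2*i) ∨ k = 2*i+1) with h | ⟨h, h'⟩ | h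
    · rw [h]; omega
    · have := hgt k h h'
      omega
    · rw [h]

lemma L2 (hD : IsDyckPath n ℓ) {i : ℕ} (hi : i < n) :
    (∃ j, i < j ∧ j < n ∧ DyckRel n ℓ (2*i+1) (2*j+1)) ↔ ℓ (2*i+2) = ℓ (2*i+1) + 1 := by
  constructor
  · rintro ⟨j, hj, hjn, _, _, he, hm⟩
    have h1 : ℓ (2*i+1) ≤ ℓ (2*i+2) := hm (2*i+2) (by omega) (by omega)
    have hstep := hD.2.2 (2*i+1) (by omega)
    have hx : 2*i+1+1 = 2*i+2 := by omega
    rw [hx] at hstep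
    omega
  · intro hup
    obtain ⟨s, hs1, hs2, hs3, hgt⟩ := H2 hD (2*n - (2*i+2)) (2*i+2) (ℓ (2*i+1))
      (by omega) (by omega)
    have hpar := parity hD s (by omega)
    have hpar2 := parity hD (2*i+1) (by omega)
    have hsodd : s % 2 = 1 := by omega
    obtain ⟨j, rfl⟩ : ∃ j, s = 2*j+1 := ⟨(s-1)/2, by omega⟩
    refine ⟨j, by omega, by omega, by omega, by omega, hs3.symm, fun k h1 h2 => ?_⟩
    rcases (by omega : k = 2*i+1 ∨ (2*i+2 ≤ k ∧ k < 2*j+1) ∨ k = 2*j+1) with h | ⟨h, h'⟩ | h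
    · rw [h]
    · have := hgt k h h'
      omega
    · rw [h]; omega

lemma cross {a b c d : ℕ} (hab : a < b) (hbc : b < c) (hcd : c < d)
    (hac : DyckRel n ℓ a c) (hbd : DyckRel n ℓ b d) : DyckRel n ℓ a b := by
  obtain ⟨ha, hc, he, hm⟩ := hac
  obtain ⟨hb, hd, he', hm'⟩ := hbd
  have h1 : ℓ a ≤ ℓ b := hm b (by omega) (by omega)
  have h2 : ℓ b ≤ ℓ c := hm' c (by omega) (by omega)
  have heq : ℓ a = ℓ b := by omega
  exact ⟨ha, hb, heq, fun k h1 h2 => hm k (by omega) (by omega)⟩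


end Basic

section Part1

variable {n : ℕ} {ℓ : ℕ → ℕ}

lemma oddClassEq {j j' : ℕ} (h : DyckRel n ℓ (2*j+1) (2*j'+1)) :
    {i | i < n ∧ DyckRel n ℓ (2 * i + 1) (2 * j + 1)}
      = {i | i < n ∧ DyckRel n ℓ (2 * i + 1) (2 * j' + 1)} := by
  ext x
  exact ⟨fun ⟨hx, hr⟩ => ⟨hx, relTrans hr h⟩, fun ⟨hx, hr⟩ => ⟨hx, relTrans hr (relSymm h)⟩⟩

lemma oddNC (hD : IsDyckPath n ℓ) : IsNCPartition n (dyckOddClasses n ℓ) := by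
  constructor
  · refine ⟨?_, ?_, ?_⟩
    · rintro B ⟨j, hj, rfl⟩
      exact ⟨j, hj, relRefl (by omega)⟩
    · rintro B ⟨j, hj, rfl⟩ x ⟨hx, _⟩
      exact hx
    · intro i hi
      refine ⟨{x | x < n ∧ DyckRel n ℓ (2 * x + 1) (2 * i + 1)},
        ⟨⟨i, hi, rfl⟩, ⟨hi, relRefl (by omega)⟩⟩, ?_⟩
      rintro B ⟨⟨j, hj, rfl⟩, ⟨_, hr⟩⟩
      exact (oddClassEq hr).symm
  · rintro a b c d hab hbc hcd B ⟨j, hj, rfl⟩ B' ⟨j', hj', rfl⟩ ha hc hb hd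
    have hac : DyckRel n ℓ (2*a+1) (2*c+1) := relTrans ha.2 (relSymm hc.2)
    have hbd : DyckRel n ℓ (2*b+1) (2*d+1) := relTrans hb.2 (relSymm hd.2)
    have hab' : DyckRel n ℓ (2*a+1) (2*b+1) :=
      cross (by omega) (by omega) (by omega) hac hbd
    have : DyckRel n ℓ (2*j+1) (2*j'+1) :=
      relTrans (relSymm ha.2) (relTrans hab' hb.2)
    exact oddClassEq this

lemma parClassEq (hD : IsDyckPath n ℓ) {j j' : ℕ} (h : DyckRel n ℓ j j') :
    {i | i < 2 * n ∧ i % 2 = j % 2 ∧ DyckRel n ℓ i j}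
      = {i | i < 2 * n ∧ i % 2 = j' % 2 ∧ DyckRel n ℓ i j'} := by
  have hp : j % 2 = j' % 2 := by
    have := parity hD j h.1
    have := parity hD j' h.2.1
    have := h.2.2.1
    omega
  ext x
  exact ⟨fun ⟨hx, hp2, hr⟩ => ⟨hx, by omega, relTrans hr h⟩,
    fun ⟨hx, hp2, hr⟩ => ⟨hx, by omega, relTrans hr (relSymm h)⟩⟩

lemma parNC (hD : IsDyckPath n ℓ) : IsNCPartition (2*n) (dyckParityClasses n ℓ) := by
  constructor
  · refine ⟨?_, ?_, ?_⟩
    · rintro B ⟨j, hj, rfl⟩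
      exact ⟨j, hj, rfl, relRefl (by omega)⟩
    · rintro B ⟨j, hj, rfl⟩ x ⟨hx, _⟩
      exact hx
    · intro i hi
      refine ⟨{x | x < 2*n ∧ x % 2 = i % 2 ∧ DyckRel n ℓ x i},
        ⟨⟨i, hi, rfl⟩, ⟨hi, rfl, relRefl (by omega)⟩⟩, ?_⟩
      rintro B ⟨⟨j, hj, rfl⟩, ⟨_, _, hr⟩⟩
      exact (parClassEq hD hr).symm
  · rintro a b c d hab hbc hcd B ⟨j, hj, rfl⟩ B' ⟨j', hj', rfl⟩ ha hc hb hd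
    have hac : DyckRel n ℓ a c := relTrans ha.2.2 (relSymm hc.2.2)
    have hbd : DyckRel n ℓ b d := relTrans hb.2.2 (relSymm hd.2.2)
    have hab' : DyckRel n ℓ a b := cross hab hbc hcd hac hbd
    have : DyckRel n ℓ j j' := relTrans (relSymm ha.2.2) (relTrans hab' hb.2.2)
    exact parClassEq hD this


end Part1

/-- blocks of `P` spanning `k` (weakly). -/
def Sset (P : Set (Set ℕ)) (k : ℕ) : Set (Set ℕ) := {B ∈ P | sInf B ≤ k ∧ k ≤ sSup B}
/-- blocks of `P` spanning the gap between `k-1` and `k`. -/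
def Tset (P : Set (Set ℕ)) (k : ℕ) : Set (Set ℕ) := {B ∈ P | sInf B < k ∧ k ≤ sSup B}

noncomputable def spanS (P : Set (Set ℕ)) (k : ℕ) : ℕ := (Sset P k).ncard
noncomputable def spanT (P : Set (Set ℕ)) (k : ℕ) : ℕ := (Tset P k).ncard

noncomputable def pathOf (n : ℕ) (P : Set (Set ℕ)) : ℕ → ℕ := fun t =>
  if t ≤ 2*n then (if t % 2 = 1 then 2 * spanS P ((t-1)/2) - 1 else 2 * spanT P (t/2))
  else 0

section

variable {n : ℕ} {P : Set (Set ℕ)} (hP : IsPartitionOf n P)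

include hP

lemma bddA {B : Set ℕ} (hB : B ∈ P) : BddAbove B :=
  BddAbove.mono (hP.2.1 B hB) bddAbove_Iio

lemma sSup_mem {B : Set ℕ} (hB : B ∈ P) : sSup B ∈ B :=
  Nat.sSup_mem (hP.1 B hB) (bddA hP hB)

lemma sInf_mem {B : Set ℕ} (hB : B ∈ P) : sInf B ∈ B :=
  Nat.sInf_mem (hP.1 B hB)

lemma uniq {B B' : Set ℕ} (hB : B ∈ P) (hB' : B' ∈ P) {x : ℕ} (hx : x ∈ B)
    (hx' : x ∈ B') : B = B' := by
  have hxn : x < n := hP.2.1 B hB hx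
  obtain ⟨C, _, hC⟩ := hP.2.2 x hxn
  rw [hC B ⟨hB, hx⟩, hC B' ⟨hB', hx'⟩]

lemma Pfin : P.Finite := by
  apply Set.Finite.of_finite_image (f := sInf)
  · exact (Set.finite_Iio n).subset (by
      rintro x ⟨B, hB, rfl⟩
      exact hP.2.1 B hB (sInf_mem hP hB))
  · intro B hB B' hB' he
    exact uniq hP hB hB' (sInf_mem hP hB) (he ▸ sInf_mem hP hB')

lemma Sfin (k : ℕ) : (Sset P k).Finite := (Pfin hP).subset (fun B hB => hB.1)
lemma Tfin (k : ℕ) : (Tset P k).Finite := (Pfin hP).subset (fun B hB => hB.1)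

lemma T_le_S (k : ℕ) : spanT P k ≤ spanS P k :=
  Set.ncard_le_ncard (fun B hB => ⟨hB.1, le_of_lt hB.2.1, hB.2.2⟩) (Sfin hP k)

lemma S_le_T_add (k : ℕ) : spanS P k ≤ spanT P k + 1 := by
  have hsub : Sset P k ⊆ Tset P k ∪ {B ∈ P | sInf B = k} := by
    rintro B ⟨hB, h1, h2⟩
    rcases Nat.lt_or_ge (sInf B) k with h | h
    · exact Or.inl ⟨hB, h, h2⟩
    · exact Or.inr ⟨hB, by omega⟩
  calc spanS P k ≤ (Tset P k ∪ {B ∈ P | sInf B = k}).ncard :=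
        Set.ncard_le_ncard hsub (((Tfin hP k).union ((Pfin hP).subset (fun B hB => hB.1))))
    _ ≤ spanT P k + ({B ∈ P | sInf B = k}).ncard := Set.ncard_union_le _ _
    _ ≤ spanT P k + 1 := by
        refine Nat.add_le_add_left ?_ _
        refine (Set.ncard_le_one_iff (((Pfin hP).subset (fun B hB => hB.1)))).mpr ?_
        rintro B B' ⟨hB, h1⟩ ⟨hB', h1'⟩
        exact uniq hP hB hB' (h1 ▸ sInf_mem hP hB) (h1' ▸ sInf_mem hP hB')

lemma T1_le_S (k : ℕ) : spanT P (k+1) ≤ spanS P k :=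
  Set.ncard_le_ncard (fun B hB => ⟨hB.1, by have := hB.2.1; omega,
    by have := hB.2.2; omega⟩) (Sfin hP k)

lemma S_le_T1_add (k : ℕ) : spanS P k ≤ spanT P (k+1) + 1 := by
  have hsub : Sset P k ⊆ Tset P (k+1) ∪ {B ∈ P | sSup B = k} := by
    rintro B ⟨hB, h1, h2⟩
    rcases Nat.lt_or_ge k (sSup B) with h | h
    · exact Or.inl ⟨hB, by omega, by omega⟩
    · exact Or.inr ⟨hB, by omega⟩
  calc spanS P k ≤ (Tset P (k+1) ∪ {B ∈ P | sSup B = k}).ncard :=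
        Set.ncard_le_ncard hsub (((Tfin hP (k+1)).union ((Pfin hP).subset (fun B hB => hB.1))))
    _ ≤ spanT P (k+1) + ({B ∈ P | sSup B = k}).ncard := Set.ncard_union_le _ _
    _ ≤ spanT P (k+1) + 1 := by
        refine Nat.add_le_add_left ?_ _
        refine (Set.ncard_le_one_iff (((Pfin hP).subset (fun B hB => hB.1)))).mpr ?_
        rintro B B' ⟨hB, h1⟩ ⟨hB', h1'⟩
        exact uniq hP hB hB' (h1 ▸ sSup_mem hP hB) (h1' ▸ sSup_mem hP hB')

lemma S_pos {k : ℕ} (hk : k < n) : 1 ≤ spanS P k := by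
  obtain ⟨B, ⟨hB, hkB⟩, _⟩ := hP.2.2 k hk
  exact (Set.ncard_pos (Sfin hP k)).mpr ⟨B, hB, Nat.sInf_le hkB, le_csSup (bddA hP hB) hkB⟩

lemma T_zero : spanT P 0 = 0 := by
  have : Tset P 0 = ∅ := by
    refine Set.eq_empty_iff_forall_notMem.mpr ?_
    rintro B ⟨hB, h1, h2⟩; omega
  rw [spanT, this, Set.ncard_empty]

lemma T_top : spanT P n = 0 := by
  have : Tset P n = ∅ := by
    ext B
    simp only [Tset, Set.mem_setOf_eq, Set.mem_empty_iff_false, iff_false, not_and]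
    intro hB h1 h2
    have := hP.2.1 B hB (sSup_mem hP hB)
    simp at this; omega
  rw [spanT, this, Set.ncard_empty]

lemma evalE {m : ℕ} (hm : m ≤ n) : pathOf n P (2*m) = 2 * spanT P m := by
  have h1 : 2*m ≤ 2*n := by omega
  have h2 : (2*m) % 2 = 0 := by omega
  have h3 : (2*m) / 2 = m := by omega
  simp [pathOf, h1, h2, h3]

lemma evalO {m : ℕ} (hm : m < n) : pathOf n P (2*m+1) = 2 * spanS P m - 1 := by
  have h1 : 2*m+1 ≤ 2*n := by omega
  have h2 : (2*m+1) % 2 = 1 := by omega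
  have h3 : (2*m+1-1) / 2 = m := by omega
  simp [pathOf, h1, h2, h3]

lemma pathOf_isDyck (hn : 0 < n) : IsDyckPath n (pathOf n P) := by
  refine ⟨?_, ?_, ?_⟩
  · have := evalE hP (Nat.zero_le n)
    simp at this
    rw [this, T_zero hP]
  · intro j hj
    rcases Nat.lt_or_ge (2*n) j with h | h
    · simp [pathOf, Nat.not_le.mpr h]
    · have : j = 2*n := by omega
      subst this
      have := evalE hP (le_refl n)
      rw [this, T_top hP]
  · intro k hk
    rcases Nat.even_or_odd k with ⟨m, hm⟩ | ⟨m, hm⟩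
    · subst hm
      have hmn : m < n := by omega
      have e1 : pathOf n P (m+m) = 2 * spanT P m := by
        have := evalE hP (le_of_lt hmn); rw [← this]; ring_nf
      have e2 : pathOf n P (m+m+1) = 2 * spanS P m - 1 := by
        have := evalO hP hmn; rw [← this]; ring_nf
      rw [e1, e2]
      have h1 := T_le_S hP m
      have h2 := S_le_T_add hP m
      have h3 := S_pos hP hmn
      omega
    · subst hm
      have hmn : m < n := by omega
      have e1 : pathOf n P (2*m+1) = 2 * spanS P m - 1 := evalO hP hmn
      have e2 : pathOf n P (2*m+1+1) = 2 * spanT P (m+1) := by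
        have := evalE hP (by omega : m+1 ≤ n)
        rw [← this]; ring_nf
      rw [e1, e2]
      have h1 := T1_le_S hP m
      have h2 := S_le_T1_add hP m
      have h3 := S_pos hP hmn
      omega


end

section

variable {n : ℕ} {P : Set (Set ℕ)} (hP : IsPartitionOf n P) (hNC : IsNoncrossing P)

include hP hNC

lemma key1 {i q : ℕ} (hiq : i < q) {B₀ : Set ℕ} (hB₀ : B₀ ∈ P) (hi : i ∈ B₀) (hq : q ∈ B₀) :
    ∀ B ∈ P, sInf B ≤ i → i ≤ sSup B → q ≤ sSup B := by
  intro B hB h1 h2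
  by_contra hlt
  push_neg at hlt
  have hne : B ≠ B₀ := by
    rintro rfl
    exact absurd (le_csSup (bddA hP hB) hq) (by omega)
  have h3 : i < sSup B := by
    rcases Nat.lt_or_ge i (sSup B) with h | h
    · exact h
    · have he : sSup B = i := by omega
      exact absurd (uniq hP hB hB₀ (he ▸ sSup_mem hP hB) hi) hne
  have h4 : sInf B < i := by
    rcases Nat.lt_or_ge (sInf B) i with h | h
    · exact h
    · have he : sInf B = i := by omega
      exact absurd (uniq hP hB hB₀ (he ▸ sInf_mem hP hB) hi) hne
  exact hne (hNC (sInf B) i (sSup B) q h4 h3 hlt B hB B₀ hB₀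
    (sInf_mem hP hB) (sSup_mem hP hB) hi hq)

lemma key2 {i j : ℕ} (hij : i < j) {B₀ : Set ℕ} (hB₀ : B₀ ∈ P) (hi : i ∈ B₀) (hj : j ∈ B₀) :
    ∀ B ∈ P, sInf B ≤ j → j ≤ sSup B → sInf B ≤ i := by
  intro B hB h1 h2
  by_contra hlt
  push_neg at hlt
  have hne : B ≠ B₀ := by
    rintro rfl
    exact absurd (Nat.sInf_le hi) (by omega)
  have h3 : sInf B < j := by
    rcases Nat.lt_or_ge (sInf B) j with h | h
    · exact h
    · have he : sInf B = j := by omega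
      exact absurd (uniq hP hB hB₀ (he ▸ sInf_mem hP hB) hj) hne
  have h4 : j < sSup B := by
    rcases Nat.lt_or_ge j (sSup B) with h | h
    · exact h
    · have he : sSup B = j := by omega
      exact absurd (uniq hP hB hB₀ (he ▸ sSup_mem hP hB) hj) hne
  exact hne ((hNC i (sInf B) j (sSup B) hlt h3 h4 B₀ hB₀ B hB
    hi hj (sInf_mem hP hB) (sSup_mem hP hB)).symm)

lemma charLe {i j : ℕ} (hij : i ≤ j) (hj : j < n) {B₀ : Set ℕ} (hB₀ : B₀ ∈ P)
    (hi : i ∈ B₀) (hjB : j ∈ B₀) : DyckRel n (pathOf n P) (2*i+1) (2*j+1) := by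
  have hKey : ∀ B ∈ P, sInf B ≤ i → i ≤ sSup B → j ≤ sSup B := by
    rcases eq_or_lt_of_le hij with rfl | h
    · exact fun B _ _ h2 => h2
    · exact key1 hP hNC h hB₀ hi hjB
  have hKey2 : ∀ B ∈ P, sInf B ≤ j → j ≤ sSup B → sInf B ≤ i := by
    rcases eq_or_lt_of_le hij with rfl | h
    · exact fun B _ h1 _ => h1
    · exact key2 hP hNC h hB₀ hi hjB
  have hS : ∀ m, i ≤ m → m ≤ j → spanS P i ≤ spanS P m := by
    intro m h1 h2
    refine Set.ncard_le_ncard ?_ (Sfin hP m)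
    rintro B ⟨hB, hb1, hb2⟩
    exact ⟨hB, by omega, by have := hKey B hB hb1 hb2; omega⟩
  have hT : ∀ m, i < m → m ≤ j → spanS P i ≤ spanT P m := by
    intro m h1 h2
    refine Set.ncard_le_ncard ?_ (Tfin hP m)
    rintro B ⟨hB, hb1, hb2⟩
    exact ⟨hB, by omega, by have := hKey B hB hb1 hb2; omega⟩
  have hSeq : spanS P i = spanS P j := by
    refine le_antisymm (hS j hij le_rfl) ?_
    refine Set.ncard_le_ncard ?_ (Sfin hP i)
    rintro B ⟨hB, hb1, hb2⟩
    exact ⟨hB, hKey2 B hB hb1 hb2, by omega⟩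
  have hin : i < n := by omega
  refine ⟨by omega, by omega, ?_, ?_⟩
  · rw [evalO hP hin, evalO hP hj, hSeq]
  · intro k h1 h2
    rw [evalO hP hin]
    rcases Nat.even_or_odd k with ⟨m, hm⟩ | ⟨m, hm⟩
    · obtain rfl : k = 2*m := by omega
      have hm1 : i < m := by omega
      have hm2 : m ≤ j := by omega
      rw [evalE hP (by omega)]
      have := hT m hm1 hm2
      have := S_pos hP hin
      omega
    · obtain rfl : k = 2*m+1 := by omega
      have hm1 : i ≤ m := by omega
      have hm2 : m ≤ j := by omega
      rw [evalO hP (by omega)]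
      have := hS m hm1 hm2
      have := S_pos hP hin
      omega

lemma charMp : ∀ d i j, j - i = d → i ≤ j → j < n →
    DyckRel n (pathOf n P) (2*i+1) (2*j+1) → ∃ B ∈ P, i ∈ B ∧ j ∈ B := by
  intro d
  induction d using Nat.strong_induction_on with
  | _ d IH =>
  intro i j hd hij hj hrel
  rcases eq_or_lt_of_le hij with rfl | hlt
  · obtain ⟨B, ⟨hB, hiB⟩, _⟩ := hP.2.2 i hj
    exact ⟨B, hB, hiB, hiB⟩
  obtain ⟨B₀, ⟨hB₀, hiB₀⟩, _⟩ := hP.2.2 i (by omega)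
  by_cases hex : ∃ k ∈ B₀, i < k ∧ k ≤ j
  · obtain ⟨k, hkB, hik, hkj⟩ := hex
    have hkn : k < n := by
      have := hP.2.1 B₀ hB₀ hkB
      simpa using this
    have r1 : DyckRel n (pathOf n P) (2*i+1) (2*k+1) :=
      charLe hP hNC (le_of_lt hik) hkn hB₀ hiB₀ hkB
    have r2 : DyckRel n (pathOf n P) (2*k+1) (2*j+1) := relTrans (relSymm r1) hrel
    obtain ⟨B, hB, hkB', hjB'⟩ := IH (j - k) (by omega) k j rfl hkj hj r2
    have hBB : B = B₀ := uniq hP hB hB₀ hkB' hkB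
    exact ⟨B₀, hB₀, hiB₀, hBB ▸ hjB'⟩
  · push_neg at hex
    exfalso
    have hin : i < n := by omega
    by_cases hq : ∃ q ∈ B₀, i < q
    · obtain ⟨q, hqB, hiq⟩ := hq
      have hjq : j < q := hex q hqB hiq
      have hsub : Sset P i ⊆ Sset P j := by
        rintro B ⟨hB, h1, h2⟩
        have := key1 hP hNC hiq hB₀ hiB₀ hqB B hB h1 h2
        exact ⟨hB, by omega, by omega⟩
      obtain ⟨C, ⟨hC, hjC⟩, _⟩ := hP.2.2 j hj
      have hCne : C ≠ B₀ := by
        rintro rfl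
        exact absurd (hex j hjC hlt) (by omega)
      have hCi : i < sInf C := by
        rcases Nat.lt_or_ge i (sInf C) with h | h
        · exact h
        rcases Nat.lt_or_ge (sInf C) i with h' | h'
        · exact absurd ((hNC (sInf C) i j q h' hlt hjq C hC B₀ hB₀
            (sInf_mem hP hC) hjC hiB₀ hqB)) hCne
        · have he : sInf C = i := by omega
          exact absurd (uniq hP hC hB₀ (he ▸ sInf_mem hP hC) hiB₀) hCne
      have hCS : C ∈ Sset P j := ⟨hC, Nat.sInf_le hjC, le_csSup (bddA hP hC) hjC⟩
      have hCSi : C ∉ Sset P i := fun h => by have := h.2.1; omega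
      have hlt2 : spanS P i < spanS P j :=
        Set.ncard_lt_ncard ⟨hsub, fun h => hCSi (h hCS)⟩ (Sfin hP j)
      have he := hrel.2.2.1
      rw [evalO hP hin, evalO hP hj] at he
      have := S_pos hP hin
      have := S_pos hP hj
      omega
    · push_neg at hq
      have hsup : sSup B₀ ≤ i := by
        have := hq _ (sSup_mem hP hB₀)
        omega
      have hsub : Tset P (i+1) ⊆ Sset P i := fun B hB =>
        ⟨hB.1, by have := hB.2.1; omega, by have := hB.2.2; omega⟩
      have hB₀S : B₀ ∈ Sset P i := ⟨hB₀, Nat.sInf_le hiB₀, le_csSup (bddA hP hB₀) hiB₀⟩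
      have hB₀T : B₀ ∉ Tset P (i+1) := fun h => by have := h.2.2; omega
      have hlt2 : spanT P (i+1) < spanS P i :=
        Set.ncard_lt_ncard ⟨hsub, fun h => hB₀T (h hB₀S)⟩ (Sfin hP i)
      have hmin := hrel.2.2.2 (2*i+2) (by omega) (by omega)
      have he2 : (2*i+2) = 2*(i+1) := by ring
      rw [he2] at hmin
      rw [evalO hP hin, evalE hP (by omega)] at hmin
      have := S_pos hP hin
      omega


end

lemma classBlockEq {n : ℕ} {P : Set (Set ℕ)} (hP : IsPartitionOf n P)
    (hNC : IsNoncrossing P) {j : ℕ} (hj : j < n)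
    {C : Set ℕ} (hC : C ∈ P) (hjC : j ∈ C) :
    {i | i < n ∧ DyckRel n (pathOf n P) (2 * i + 1) (2 * j + 1)} = C := by
  ext x
  constructor
  · rintro ⟨hx, hr⟩
    rcases le_or_gt x j with h | h
    · obtain ⟨B', hB', hxB', hjB'⟩ := charMp hP hNC (j - x) x j rfl h hj hr
      rwa [uniq hP hB' hC hjB' hjC] at hxB'
    · obtain ⟨B', hB', hjB', hxB'⟩ := charMp hP hNC (x - j) j x rfl (le_of_lt h) hx (relSymm hr)
      rwa [uniq hP hB' hC hjB' hjC] at hxB'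
  · intro hxC
    have hx : x < n := by have := hP.2.1 C hC hxC; simpa using this
    refine ⟨hx, ?_⟩
    rcases le_or_gt x j with h | h
    · exact charLe hP hNC h hj hC hxC hjC
    · exact relSymm (charLe hP hNC (le_of_lt h) hx hC hjC hxC)

lemma classesEq {n : ℕ} {P : Set (Set ℕ)} (hP : IsPartitionOf n P)
    (hNC : IsNoncrossing P) : dyckOddClasses n (pathOf n P) = P := by
  ext B
  constructor
  · rintro ⟨j, hj, rfl⟩
    obtain ⟨C, ⟨hC, hjC⟩, _⟩ := hP.2.2 j hj
    rw [classBlockEq hP hNC hj hC hjC]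
    exact hC
  · intro hB
    obtain ⟨j, hjB⟩ := hP.1 B hB
    have hj : j < n := by have := hP.2.1 B hB hjB; simpa using this
    exact ⟨j, hj, (classBlockEq hP hNC hj hB hjB).symm⟩

section Inj

variable {n : ℕ} {ℓ ℓ' : ℕ → ℕ}

lemma relOfClasses {i j : ℕ} (hi : i < n) (hj : j < n)
    (h : ∃ B ∈ dyckOddClasses n ℓ, i ∈ B ∧ j ∈ B) : DyckRel n ℓ (2*i+1) (2*j+1) := by
  obtain ⟨B, ⟨j₀, hj₀, rfl⟩, ⟨_, hri⟩, ⟨_, hrj⟩⟩ := h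
  exact relTrans hri (relSymm hrj)

lemma classesOfRel {i j : ℕ} (hi : i < n) (hj : j < n)
    (h : DyckRel n ℓ (2*i+1) (2*j+1)) : ∃ B ∈ dyckOddClasses n ℓ, i ∈ B ∧ j ∈ B :=
  ⟨_, ⟨j, hj, rfl⟩, ⟨hi, h⟩, ⟨hj, relRefl (by omega)⟩⟩

lemma pathInj (hD : IsDyckPath n ℓ) (hD' : IsDyckPath n ℓ')
    (hEq : dyckOddClasses n ℓ = dyckOddClasses n ℓ') : ℓ = ℓ' := by
  have hrel : ∀ i j, i < n → j < n →
      (DyckRel n ℓ (2*i+1) (2*j+1) ↔ DyckRel n ℓ' (2*i+1) (2*j+1)) := by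
    intro i j hi hj
    constructor
    · intro h
      exact relOfClasses hi hj (hEq ▸ classesOfRel hi hj h)
    · intro h
      exact relOfClasses hi hj (hEq.symm ▸ classesOfRel hi hj h)
  funext k
  induction k with
  | zero => rw [hD.1, hD'.1]
  | succ m ih =>
    rcases Nat.lt_or_ge m (2*n) with hm | hm
    · rcases Nat.even_or_odd m with ⟨i, he⟩ | ⟨i, he⟩
      · obtain rfl : m = 2*i := by omega
        have hi : i < n := by omega
        have s1 := hD.2.2 (2*i) (by omega)
        have s2 := hD'.2.2 (2*i) (by omega)
        by_cases hex : ∃ j, j < i ∧ DyckRel n ℓ (2*j+1) (2*i+1)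
        · have d1 := (L1 hD hi).mp hex
          have d2 := (L1 hD' hi).mp (by
            obtain ⟨j, hji, hr⟩ := hex
            exact ⟨j, hji, (hrel j i (by omega) hi).mp hr⟩)
          omega
        · have d1 : ¬ ℓ (2*i) = ℓ (2*i+1) + 1 := fun h => hex ((L1 hD hi).mpr h)
          have d2 : ¬ ℓ' (2*i) = ℓ' (2*i+1) + 1 := fun h => hex (by
            obtain ⟨j, hji, hr⟩ := (L1 hD' hi).mpr h
            exact ⟨j, hji, (hrel j i (by omega) hi).mpr hr⟩)
          omega
      · obtain rfl : m = 2*i+1 := by omega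
        have hi : i < n := by omega
        have s1 := hD.2.2 (2*i+1) (by omega)
        have s2 := hD'.2.2 (2*i+1) (by omega)
        have he2 : 2*i+1+1 = 2*i+2 := by omega
        rw [he2] at s1 s2 ⊢
        by_cases hex : ∃ j, i < j ∧ j < n ∧ DyckRel n ℓ (2*i+1) (2*j+1)
        · have d1 := (L2 hD hi).mp hex
          have d2 := (L2 hD' hi).mp (by
            obtain ⟨j, hij, hjn, hr⟩ := hex
            exact ⟨j, hij, hjn, (hrel i j hi hjn).mp hr⟩)
          omega
        · have d1 : ¬ ℓ (2*i+2) = ℓ (2*i+1) + 1 := fun h => hex ((L2 hD hi).mpr h)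
          have d2 : ¬ ℓ' (2*i+2) = ℓ' (2*i+1) + 1 := fun h => hex (by
            obtain ⟨j, hij, hjn, hr⟩ := (L2 hD' hi).mpr h
            exact ⟨j, hij, hjn, (hrel i j hi hjn).mpr hr⟩)
          omega
    · rw [hD.2.1 (m+1) (by omega), hD'.2.1 (m+1) (by omega)]


end Inj

end DyckAux

/-- For every positive integer `n` and every `2n`-step Dyck path `ℓ`:
`Ψ(ℓ)` (the classes of `∼_ℓ` among odd indices, identifying `2j+1` with `j`) is a noncrossing
partition of `{0, …, n-1}`; the even classes together with the odd classes form a noncrossing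
partition of `{0, …, 2n-1}`; and `ℓ ↦ Ψ(ℓ)` is a bijection from `2n`-step Dyck paths onto
noncrossing partitions of `{0, …, n-1}`. -/
theorem dyckOddClasses_props (n : ℕ) (hn : 0 < n) :
    (∀ ℓ : ℕ → ℕ, IsDyckPath n ℓ →
      IsNCPartition n (dyckOddClasses n ℓ) ∧
      IsNCPartition (2 * n) (dyckParityClasses n ℓ)) ∧
    Set.BijOn (dyckOddClasses n) {ℓ | IsDyckPath n ℓ} {P | IsNCPartition n P} := by
  refine ⟨fun ℓ hD => ⟨DyckAux.oddNC hD, DyckAux.parNC hD⟩, ?_, ?_, ?_⟩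
  · intro ℓ hD
    exact DyckAux.oddNC hD
  · intro ℓ h ℓ' h' he
    exact DyckAux.pathInj h h' he
  · intro P hP
    exact ⟨DyckAux.pathOf n P, DyckAux.pathOf_isDyck hP.1 hn, DyckAux.classesEq hP.1 hP.2⟩
end

section
/- Let n be a positive integer. For a noncrossing partition P of {0, 1, …, n−1}, define its Kreweras complement K(P) = Ψ(Φ^{-1}(P)), where Φ^{-1}(P) is the unique 2n-step Dyck path encoding P. Then for every noncrossing partition P of {0, 1, …, n−1}, the double complement K(K(P)) equals the image of P under the cyclic shift i ↦ i − 1 (mod n), i.e., the blocks of K(K(P)) are exactly the sets {i − 1 mod n : i ∈ B} for B a block of P. -/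
section KrewerasAux

variable {n : ℕ} {ℓ ℓ₁ ℓ₂ : ℕ → ℕ}

lemma IsDyckPath.step (h : IsDyckPath n ℓ) {k : ℕ} (hk : k < 2 * n) :
    ℓ (k + 1) = ℓ k + 1 ∨ ℓ k = ℓ (k + 1) + 1 := h.2.2 k hk

lemma IsDyckPath.parity (h : IsDyckPath n ℓ) : ∀ k, k ≤ 2 * n → ℓ k % 2 = k % 2 := by
  intro k
  induction k with
  | zero => intro _; simp [h.1]
  | succ k ih =>
    intro hk
    have hs := h.2.2 k (by omega)
    have := ih (by omega)
    omega

lemma IsDyckPath.one (h : IsDyckPath n ℓ) (hn : 0 < n) : ℓ 1 = 1 := by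
  have hs := h.2.2 0 (by omega)
  norm_num at hs
  have h0 := h.1
  omega

lemma IsDyckPath.last (h : IsDyckPath n ℓ) (hn : 0 < n) : ℓ (2 * n - 1) = 1 := by
  have hs := h.2.2 (2 * n - 1) (by omega)
  have h0 := h.2.1 (2 * n) le_rfl
  rw [show 2 * n - 1 + 1 = 2 * n from by omega] at hs
  omega

lemma DyckRel.symm {i j : ℕ} (h : DyckRel n ℓ i j) : DyckRel n ℓ j i := by
  obtain ⟨h1, h2, h3, h4⟩ := h
  exact ⟨h2, h1, h3.symm, fun k hk1 hk2 => by
    rw [← h3]; exact h4 k (by omega) (by omega)⟩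

lemma DyckRel.refl {i : ℕ} (hi : i ≤ 2 * n) : DyckRel n ℓ i i :=
  ⟨hi, hi, rfl, fun k h1 h2 => by
    have : k = i := by omega
    simp [this]⟩

lemma DyckRel.trans {i j k : ℕ} (hij : DyckRel n ℓ i j) (hjk : DyckRel n ℓ j k) :
    DyckRel n ℓ i k := by
  obtain ⟨hi, hj, e1, m1⟩ := hij
  obtain ⟨_, hk, e2, m2⟩ := hjk
  refine ⟨hi, hk, e1.trans e2, fun r hr1 hr2 => ?_⟩
  by_cases hc : min i j ≤ r ∧ r ≤ max i j
  · exact m1 r hc.1 hc.2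
  · have := m2 r (by omega) (by omega)
    omega

lemma dyckRel_zero (h : IsDyckPath n ℓ) {m : ℕ} (hm : m ≤ 2 * n) :
    DyckRel n ℓ 0 m ↔ ℓ m = 0 := by
  constructor
  · rintro ⟨_, _, e, _⟩
    rw [← e, h.1]
  · intro hz
    exact ⟨by omega, hm, by rw [h.1, hz], fun k _ _ => by rw [h.1]; exact Nat.zero_le _⟩

end KrewerasAux
section KrewerasAux2

variable {n : ℕ} {ℓ ℓ₁ ℓ₂ : ℕ → ℕ}

lemma exists_return (h : IsDyckPath n ℓ) {j : ℕ} (hj : j < n) (h0 : ℓ (2 * j) ≠ 0)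
    (hup : ℓ (2 * j + 1) = ℓ (2 * j) + 1) :
    ∃ b, j < b ∧ b < n ∧ DyckRel n ℓ (2 * j) (2 * b) := by
  have hne : {m | 2 * j < m ∧ m ≤ 2 * n ∧ ℓ m ≤ ℓ (2 * j)}.Nonempty :=
    ⟨2 * n, by omega, le_rfl, by rw [h.2.1 (2 * n) le_rfl]; omega⟩
  set m0 := sInf {m | 2 * j < m ∧ m ≤ 2 * n ∧ ℓ m ≤ ℓ (2 * j)} with hm0
  have hmem : 2 * j < m0 ∧ m0 ≤ 2 * n ∧ ℓ m0 ≤ ℓ (2 * j) := Nat.sInf_mem hne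
  have hne1 : m0 ≠ 2 * j + 1 := by
    intro he
    rw [he] at hmem
    omega
  have hm2 : 2 * j + 2 ≤ m0 := by omega
  have hprev : ℓ (2 * j) < ℓ (m0 - 1) := by
    by_cases hc : m0 - 1 = 2 * j + 1
    · rw [hc]; omega
    · have hnm := Nat.notMem_of_lt_sInf (show m0 - 1 < m0 by omega)
      simp only [Set.mem_setOf_eq, not_and, not_le] at hnm
      exact hnm (by omega) (by omega)
  have hstep := h.2.2 (m0 - 1) (by omega)
  rw [show m0 - 1 + 1 = m0 from by omega] at hstep
  have hval : ℓ m0 = ℓ (2 * j) := by omega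
  have hpar1 := h.parity m0 (by omega)
  have hpar2 := h.parity (2 * j) (by omega)
  have hpare : m0 % 2 = 0 := by omega
  refine ⟨m0 / 2, by omega, ?_, ?_⟩
  · have hzz := h.2.1 (2 * n) le_rfl
    have : m0 ≠ 2 * n := by
      intro he; rw [he, hzz] at hval; omega
    omega
  · rw [show 2 * (m0 / 2) = m0 from by omega]
    refine ⟨by omega, by omega, hval.symm, fun r hr1 hr2 => ?_⟩
    by_cases he1 : r = 2 * j
    · rw [he1]
    by_cases he2 : r = m0
    · rw [he2]; omega
    · have hnm := Nat.notMem_of_lt_sInf (show r < m0 by omega)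
      simp only [Set.mem_setOf_eq, not_and, not_le] at hnm
      have := hnm (by omega) (by omega)
      omega

lemma exists_open (h : IsDyckPath n ℓ) {j : ℕ} (hj : j + 1 < n)
    (hdown : ℓ (2 * j + 1) = ℓ (2 * j + 2) + 1) :
    ∃ a, a ≤ j ∧ DyckRel n ℓ (2 * a) (2 * (j + 1)) := by
  classical
  have h0p : ℓ 0 ≤ ℓ (2 * j + 2) := by rw [h.1]; exact Nat.zero_le _
  have hspec : ℓ (Nat.findGreatest (fun r => ℓ r ≤ ℓ (2 * j + 2)) (2 * j + 1)) ≤ ℓ (2 * j + 2) :=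
    Nat.findGreatest_spec (P := fun r => ℓ r ≤ ℓ (2 * j + 2)) (Nat.zero_le _) h0p
  have hGle : Nat.findGreatest (fun r => ℓ r ≤ ℓ (2 * j + 2)) (2 * j + 1) ≤ 2 * j + 1 :=
    Nat.findGreatest_le _
  have hgr : ∀ r, Nat.findGreatest (fun r => ℓ r ≤ ℓ (2 * j + 2)) (2 * j + 1) < r →
      r ≤ 2 * j + 1 → ¬ ℓ r ≤ ℓ (2 * j + 2) :=
    fun r h1 h2 => Nat.findGreatest_is_greatest (P := fun r => ℓ r ≤ ℓ (2 * j + 2)) h1 h2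
  set G := Nat.findGreatest (fun r => ℓ r ≤ ℓ (2 * j + 2)) (2 * j + 1) with hG
  have hne1 : G ≠ 2 * j + 1 := by
    intro he
    rw [he] at hspec
    omega
  have hval : ℓ G = ℓ (2 * j + 2) := by
    by_contra hc
    have hlt : ℓ G < ℓ (2 * j + 2) := by omega
    have hstep := h.2.2 G (by omega)
    have := hgr (G + 1) (by omega) (by omega)
    omega
  have hpar1 := h.parity G (by omega)
  have hpar2 := h.parity (2 * j + 2) (by omega)
  have hpare : G % 2 = 0 := by omega
  refine ⟨G / 2, by omega, ?_⟩
  rw [show 2 * (G / 2) = G from by omega]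
  refine ⟨by omega, by omega, hval, fun r hr1 hr2 => ?_⟩
  by_cases he1 : r = G
  · rw [he1]
  by_cases he2 : r = 2 * j + 2
  · rw [he2]; omega
  · have := hgr r (by omega) (by omega)
    omega

lemma up_iff (h : IsDyckPath n ℓ) {j : ℕ} (hj : j < n) :
    ℓ (2 * j + 1) = ℓ (2 * j) + 1 ↔
      (ℓ (2 * j) = 0 ∨ ∃ b, j < b ∧ b < n ∧ DyckRel n ℓ (2 * j) (2 * b)) := by
  constructor
  · intro hup
    by_cases h0 : ℓ (2 * j) = 0
    · exact Or.inl h0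
    · exact Or.inr (exists_return h hj h0 hup)
  · intro hQ
    have hstep := h.2.2 (2 * j) (by omega)
    rcases hstep with hu | hd
    · exact hu
    · exfalso
      rcases hQ with h0 | ⟨b, hb1, hb2, hrel⟩
      · omega
      · have := hrel.2.2.2 (2 * j + 1) (by omega) (by omega)
        omega

lemma in_up_iff (h : IsDyckPath n ℓ) {j : ℕ} (hj : j + 1 < n) :
    ℓ (2 * j + 2) = ℓ (2 * j + 1) + 1 ↔
      ¬ ∃ a, a ≤ j ∧ DyckRel n ℓ (2 * a) (2 * (j + 1)) := by
  constructor
  · rintro hup ⟨a, ha, hrel⟩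
    have hm := hrel.2.2.2 (2 * j + 1) (by omega) (by omega)
    have he := hrel.2.2.1
    rw [show 2 * (j + 1) = 2 * j + 2 from by omega] at he
    omega
  · intro hno
    have hstep := h.2.2 (2 * j + 1) (by omega)
    rw [show 2 * j + 1 + 1 = 2 * j + 2 from by omega] at hstep
    rcases hstep with hu | hd
    · exact hu
    · exact absurd (exists_open h hj hd) hno

lemma odd_eq (h₁ : IsDyckPath n ℓ₁) (h₂ : IsDyckPath n ℓ₂)
    (H : ∀ i j, i < n → j < n → (DyckRel n ℓ₁ (2 * i) (2 * j) ↔ DyckRel n ℓ₂ (2 * i) (2 * j)))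
    {j : ℕ} (hj : j < n) (hE : ℓ₁ (2 * j) = ℓ₂ (2 * j)) :
    ℓ₁ (2 * j + 1) = ℓ₂ (2 * j + 1) := by
  have u1 := up_iff h₁ hj
  have u2 := up_iff h₂ hj
  have hQ : (ℓ₁ (2 * j) = 0 ∨ ∃ b, j < b ∧ b < n ∧ DyckRel n ℓ₁ (2 * j) (2 * b)) ↔
      (ℓ₂ (2 * j) = 0 ∨ ∃ b, j < b ∧ b < n ∧ DyckRel n ℓ₂ (2 * j) (2 * b)) := by
    apply or_congr (by omega)
    exact exists_congr fun b => and_congr_right fun _ =>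
      and_congr_right fun hb2 => H j b hj hb2
  by_cases hq : ℓ₁ (2 * j) = 0 ∨ ∃ b, j < b ∧ b < n ∧ DyckRel n ℓ₁ (2 * j) (2 * b)
  · have e1 := u1.mpr hq
    have e2 := u2.mpr (hQ.mp hq)
    omega
  · have hd1 : ℓ₁ (2 * j) = ℓ₁ (2 * j + 1) + 1 := by
      rcases h₁.2.2 (2 * j) (by omega) with hu | hd
      · exact absurd (u1.mp hu) hq
      · exact hd
    have hd2 : ℓ₂ (2 * j) = ℓ₂ (2 * j + 1) + 1 := by
      rcases h₂.2.2 (2 * j) (by omega) with hu | hd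
      · exact absurd (u2.mp hu) (hQ.not.mp hq)
      · exact hd
    omega

lemma even_succ_eq (h₁ : IsDyckPath n ℓ₁) (h₂ : IsDyckPath n ℓ₂)
    (H : ∀ i j, i < n → j < n → (DyckRel n ℓ₁ (2 * i) (2 * j) ↔ DyckRel n ℓ₂ (2 * i) (2 * j)))
    {j : ℕ} (hj : j + 1 ≤ n) (hO : ℓ₁ (2 * j + 1) = ℓ₂ (2 * j + 1)) :
    ℓ₁ (2 * j + 2) = ℓ₂ (2 * j + 2) := by
  rcases eq_or_lt_of_le hj with he | hlt
  · have h2n : 2 * j + 2 = 2 * n := by omega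
    rw [h2n, h₁.2.1 _ le_rfl, h₂.2.1 _ le_rfl]
  · have i1 := in_up_iff h₁ hlt
    have i2 := in_up_iff h₂ hlt
    have hQ : (∃ a, a ≤ j ∧ DyckRel n ℓ₁ (2 * a) (2 * (j + 1))) ↔
        (∃ a, a ≤ j ∧ DyckRel n ℓ₂ (2 * a) (2 * (j + 1))) :=
      exists_congr fun a => and_congr_right fun ha => H a (j + 1) (by omega) hlt
    by_cases hq : ∃ a, a ≤ j ∧ DyckRel n ℓ₁ (2 * a) (2 * (j + 1))
    · have hd1 : ℓ₁ (2 * j + 1) = ℓ₁ (2 * j + 2) + 1 := by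
        rcases h₁.2.2 (2 * j + 1) (by omega) with hu | hd
        · rw [show 2 * j + 1 + 1 = 2 * j + 2 from by omega] at hu
          exact absurd hq (i1.mp hu)
        · rw [show 2 * j + 1 + 1 = 2 * j + 2 from by omega] at hd
          exact hd
      have hd2 : ℓ₂ (2 * j + 1) = ℓ₂ (2 * j + 2) + 1 := by
        rcases h₂.2.2 (2 * j + 1) (by omega) with hu | hd
        · rw [show 2 * j + 1 + 1 = 2 * j + 2 from by omega] at hu
          exact absurd (hQ.mp hq) (i2.mp hu)
        · rw [show 2 * j + 1 + 1 = 2 * j + 2 from by omega] at hd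
          exact hd
      omega
    · have e1 := i1.mpr hq
      have e2 := i2.mpr (hQ.not.mp hq)
      omega

lemma dyck_ext (hn : 0 < n) (h₁ : IsDyckPath n ℓ₁) (h₂ : IsDyckPath n ℓ₂)
    (H : ∀ i j, i < n → j < n → (DyckRel n ℓ₁ (2 * i) (2 * j) ↔ DyckRel n ℓ₂ (2 * i) (2 * j))) :
    ℓ₁ = ℓ₂ := by
  have even : ∀ j, j ≤ n → ℓ₁ (2 * j) = ℓ₂ (2 * j) := by
    intro j
    induction j with
    | zero => intro _; simp [h₁.1, h₂.1]
    | succ j ih =>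
      intro hj
      have hE := ih (by omega)
      have hO := odd_eq h₁ h₂ H (by omega) hE
      have := even_succ_eq h₁ h₂ H (by omega) hO
      rw [show 2 * (j + 1) = 2 * j + 2 from by omega]
      exact this
  funext k
  by_cases hk : 2 * n ≤ k
  · rw [h₁.2.1 k hk, h₂.2.1 k hk]
  · rcases Nat.even_or_odd k with ⟨j, hj⟩ | ⟨j, hj⟩
    · rw [show k = 2 * j from by omega]
      exact even j (by omega)
    · rw [show k = 2 * j + 1 from by omega]
      exact odd_eq h₁ h₂ H (by omega) (even j (by omega))

lemma rel_iff_mem (h : IsDyckPath n ℓ) {i j : ℕ} (hi : i < n) (hj : j < n) :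
    DyckRel n ℓ (2 * i) (2 * j) ↔ ∃ B ∈ dyckEvenClasses n ℓ, i ∈ B ∧ j ∈ B := by
  constructor
  · intro hrel
    refine ⟨{i' | i' < n ∧ DyckRel n ℓ (2 * i') (2 * j)}, ⟨j, hj, rfl⟩, ⟨hi, hrel⟩,
      ⟨hj, DyckRel.refl (by omega)⟩⟩
  · rintro ⟨B, ⟨j₀, hj₀, rfl⟩, hiB, hjB⟩
    obtain ⟨-, hi'⟩ := hiB
    obtain ⟨-, hj'⟩ := hjB
    exact hi'.trans hj'.symm

end KrewerasAux2
section KrewerasAux3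

variable {n : ℕ} {ℓ : ℕ → ℕ}

/-- First return time of the path to `0`. -/
noncomputable def tauT (ℓ : ℕ → ℕ) : ℕ := sInf {m | 0 < m ∧ ℓ m = 0}

/-- The rotated Dyck path encoding the Kreweras complement. -/
noncomputable def rot (n : ℕ) (ℓ : ℕ → ℕ) : ℕ → ℕ := fun k =>
  if k + 2 ≤ tauT ℓ then ℓ (k + 1) - 1 else if k < 2 * n then ℓ (k + 1) + 1 else 0

lemma tau_facts (h : IsDyckPath n ℓ) (hn : 0 < n) :
    2 ≤ tauT ℓ ∧ tauT ℓ ≤ 2 * n ∧ tauT ℓ % 2 = 0 ∧ ℓ (tauT ℓ) = 0 ∧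
      ℓ (tauT ℓ - 1) = 1 ∧ ∀ m, 0 < m → m < tauT ℓ → 0 < ℓ m := by
  have hne : {m | 0 < m ∧ ℓ m = 0}.Nonempty := ⟨2 * n, by omega, h.2.1 _ le_rfl⟩
  have hmem : 0 < tauT ℓ ∧ ℓ (tauT ℓ) = 0 := Nat.sInf_mem hne
  have hle : tauT ℓ ≤ 2 * n := Nat.sInf_le ⟨by omega, h.2.1 _ le_rfl⟩
  have hpos : ∀ m, 0 < m → m < tauT ℓ → 0 < ℓ m := by
    intro m h1 h2
    have hnm := Nat.notMem_of_lt_sInf (s := {m | 0 < m ∧ ℓ m = 0}) h2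
    simp only [Set.mem_setOf_eq, not_and] at hnm
    have := hnm h1
    omega
  have h1 := h.one hn
  have h2 : 2 ≤ tauT ℓ := by
    rcases Nat.lt_or_ge (tauT ℓ) 2 with hc | hc
    · exfalso
      have : tauT ℓ = 1 := by omega
      rw [this] at hmem
      omega
    · exact hc
  have hstep := h.2.2 (tauT ℓ - 1) (by omega)
  rw [show tauT ℓ - 1 + 1 = tauT ℓ from by omega] at hstep
  have hone : ℓ (tauT ℓ - 1) = 1 := by omega
  have hpar := h.parity (tauT ℓ) hle
  exact ⟨h2, hle, by omega, hmem.2, hone, hpos⟩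

lemma rot_eq_low {k : ℕ} (hk : k + 2 ≤ tauT ℓ) : rot n ℓ k = ℓ (k + 1) - 1 := if_pos hk

lemma rot_eq_high {k : ℕ} (hk1 : ¬ k + 2 ≤ tauT ℓ) (hk2 : k < 2 * n) :
    rot n ℓ k = ℓ (k + 1) + 1 := by
  unfold rot
  rw [if_neg hk1, if_pos hk2]

lemma rot_eq_end {k : ℕ} (hτ : tauT ℓ ≤ 2 * n) (hk2 : ¬ k < 2 * n) : rot n ℓ k = 0 := by
  unfold rot
  rw [if_neg (by omega), if_neg hk2]

lemma rot_isDyck (h : IsDyckPath n ℓ) (hn : 0 < n) : IsDyckPath n (rot n ℓ) := by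
  obtain ⟨ht2, htle, htpar, htz, htone, htpos⟩ := tau_facts h hn
  refine ⟨?_, ?_, ?_⟩
  · rw [rot_eq_low (by omega), h.one hn]
  · intro j hj
    exact rot_eq_end htle (by omega)
  · intro k hk
    by_cases c1 : k + 3 ≤ tauT ℓ
    · have e1 : rot n ℓ k = ℓ (k + 1) - 1 := rot_eq_low (by omega)
      have e2 : rot n ℓ (k + 1) = ℓ (k + 2) - 1 := by
        have := rot_eq_low (n := n) (ℓ := ℓ) (k := k + 1) (by omega)
        rwa [show k + 1 + 1 = k + 2 from by omega] at this
      have hstep := h.2.2 (k + 1) (by omega)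
      rw [show k + 1 + 1 = k + 2 from by omega] at hstep
      have hp1 := htpos (k + 1) (by omega) (by omega)
      have hp2 := htpos (k + 2) (by omega) (by omega)
      rw [e1, e2]
      omega
    · by_cases c2 : k + 2 ≤ tauT ℓ
      · -- k = tau - 2
        have e1 : rot n ℓ k = 0 := by
          rw [rot_eq_low (by omega), show k + 1 = tauT ℓ - 1 from by omega, htone]
        have e2 : rot n ℓ (k + 1) = 1 := by
          have := rot_eq_high (n := n) (ℓ := ℓ) (k := k + 1) (by omega) (by omega)
          rwa [show k + 1 + 1 = tauT ℓ from by omega, htz] at this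
        rw [e1, e2]
        omega
      · by_cases c3 : k + 1 < 2 * n
        · have e1 : rot n ℓ k = ℓ (k + 1) + 1 := rot_eq_high (by omega) (by omega)
          have e2 : rot n ℓ (k + 1) = ℓ (k + 2) + 1 := by
            have := rot_eq_high (n := n) (ℓ := ℓ) (k := k + 1) (by omega) (by omega)
            rwa [show k + 1 + 1 = k + 2 from by omega] at this
          have hstep := h.2.2 (k + 1) (by omega)
          rw [show k + 1 + 1 = k + 2 from by omega] at hstep
          rw [e1, e2]
          omega
        · -- k + 1 = 2n
          have e1 : rot n ℓ k = 1 := by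
            rw [rot_eq_high (by omega) (by omega), show k + 1 = 2 * n from by omega,
              h.2.1 _ le_rfl]
          have e2 : rot n ℓ (k + 1) = 0 := rot_eq_end htle (by omega)
          rw [e1, e2]
          omega

lemma rel_shift_sub {f g : ℕ → ℕ} {a b : ℕ} (hab : a ≤ b) (hb : b + 1 ≤ 2 * n)
    (hfg : ∀ k, a ≤ k → k ≤ b → f k + 1 = g (k + 1)) :
    DyckRel n f a b ↔ DyckRel n g (a + 1) (b + 1) := by
  have ha' := hfg a le_rfl hab
  have hb' := hfg b hab le_rfl
  constructor
  · rintro ⟨_, _, he, hm⟩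
    refine ⟨by omega, by omega, by omega, fun r h1 h2 => ?_⟩
    have hmr := hm (r - 1) (by omega) (by omega)
    have hr := hfg (r - 1) (by omega) (by omega)
    rw [show r - 1 + 1 = r from by omega] at hr
    omega
  · rintro ⟨_, _, he, hm⟩
    refine ⟨by omega, by omega, by omega, fun r h1 h2 => ?_⟩
    have hmr := hm (r + 1) (by omega) (by omega)
    have hr := hfg r (by omega) (by omega)
    omega

lemma rel_shift_add {f g : ℕ → ℕ} {a b : ℕ} (hab : a ≤ b) (hb : b + 1 ≤ 2 * n)
    (hfg : ∀ k, a ≤ k → k ≤ b → f k = g (k + 1) + 1) :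
    DyckRel n f a b ↔ DyckRel n g (a + 1) (b + 1) := by
  have ha' := hfg a le_rfl hab
  have hb' := hfg b hab le_rfl
  constructor
  · rintro ⟨_, _, he, hm⟩
    refine ⟨by omega, by omega, by omega, fun r h1 h2 => ?_⟩
    have hmr := hm (r - 1) (by omega) (by omega)
    have hr := hfg (r - 1) (by omega) (by omega)
    rw [show r - 1 + 1 = r from by omega] at hr
    omega
  · rintro ⟨_, _, he, hm⟩
    refine ⟨by omega, by omega, by omega, fun r h1 h2 => ?_⟩
    have hmr := hm (r + 1) (by omega) (by omega)
    have hr := hfg r (by omega) (by omega)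
    omega

end KrewerasAux3
section KrewerasAux4

variable {n : ℕ} {ℓ : ℕ → ℕ}

lemma sigma_shift (hn : 0 < n) {i : ℕ} (hi : i < n) : ((i + (n - 1)) % n + 1) % n = i := by
  rw [Nat.mod_add_mod, show i + (n - 1) + 1 = i + n from by omega, Nat.add_mod_right,
    Nat.mod_eq_of_lt hi]

lemma shift_sigma (hn : 0 < n) {i : ℕ} (hi : i < n) : ((i + 1) % n + (n - 1)) % n = i := by
  rw [Nat.mod_add_mod, show i + 1 + (n - 1) = i + n from by omega, Nat.add_mod_right,
    Nat.mod_eq_of_lt hi]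

lemma even_transfer (h : IsDyckPath n ℓ) (hn : 0 < n) {i j : ℕ} (hij : i ≤ j) (hj : j < n) :
    DyckRel n (rot n ℓ) (2 * i) (2 * j) ↔ DyckRel n ℓ (2 * i + 1) (2 * j + 1) := by
  obtain ⟨ht2, htle, htpar, htz, htone, htpos⟩ := tau_facts h hn
  by_cases c1 : 2 * j + 2 ≤ tauT ℓ
  · exact rel_shift_sub (by omega) (by omega) (fun k hk1 hk2 => by
      rw [rot_eq_low (by omega)]
      have := htpos (k + 1) (by omega) (by omega)
      omega)
  · by_cases c2 : tauT ℓ ≤ 2 * i + 1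
    · exact rel_shift_add (by omega) (by omega) (fun k hk1 hk2 =>
        rot_eq_high (by omega) (by omega))
    · apply iff_of_false
      · rintro ⟨-, -, he, hm⟩
        have h1 := hm (tauT ℓ - 2) (by omega) (by omega)
        have e1 : rot n ℓ (tauT ℓ - 2) = 0 := by
          rw [rot_eq_low (by omega), show tauT ℓ - 2 + 1 = tauT ℓ - 1 from by omega, htone]
        have e2 : rot n ℓ (2 * i) = ℓ (2 * i + 1) - 1 := rot_eq_low (by omega)
        have e3 : rot n ℓ (2 * j) = ℓ (2 * j + 1) + 1 := rot_eq_high (by omega) (by omega)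
        have hp := htpos (2 * i + 1) (by omega) (by omega)
        omega
      · rintro ⟨-, -, he, hm⟩
        have h1 := hm (tauT ℓ) (by omega) (by omega)
        rw [htz] at h1
        have hp := h.parity (2 * i + 1) (by omega)
        omega

lemma even_transfer' (h : IsDyckPath n ℓ) (hn : 0 < n) {i j : ℕ} (hi : i < n) (hj : j < n) :
    DyckRel n (rot n ℓ) (2 * i) (2 * j) ↔ DyckRel n ℓ (2 * i + 1) (2 * j + 1) := by
  rcases le_total i j with hij | hij
  · exact even_transfer h hn hij hj
  · have t := even_transfer h hn hij hi
    exact ⟨fun hr => DyckRel.symm (t.mp (DyckRel.symm hr)),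
      fun hr => DyckRel.symm (t.mpr (DyckRel.symm hr))⟩

lemma odd_transfer (h : IsDyckPath n ℓ) (hn : 0 < n) {x y : ℕ} (hxy : x ≤ y) (hy : y < n) :
    DyckRel n (rot n ℓ) (2 * x + 1) (2 * y + 1) ↔
      DyckRel n ℓ (2 * ((x + 1) % n)) (2 * ((y + 1) % n)) := by
  obtain ⟨ht2, htle, htpar, htz, htone, htpos⟩ := tau_facts h hn
  by_cases hyn : y + 1 < n
  · rw [Nat.mod_eq_of_lt (show x + 1 < n by omega), Nat.mod_eq_of_lt hyn,
      show 2 * (x + 1) = 2 * x + 1 + 1 from by omega,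
      show 2 * (y + 1) = 2 * y + 1 + 1 from by omega]
    by_cases c1 : 2 * y + 3 ≤ tauT ℓ
    · exact rel_shift_sub (by omega) (by omega) (fun k hk1 hk2 => by
        rw [rot_eq_low (by omega)]
        have := htpos (k + 1) (by omega) (by omega)
        omega)
    · by_cases c2 : tauT ℓ ≤ 2 * x + 2
      · exact rel_shift_add (by omega) (by omega) (fun k hk1 hk2 =>
          rot_eq_high (by omega) (by omega))
      · apply iff_of_false
        · rintro ⟨-, -, he, hm⟩
          have h1 := hm (tauT ℓ - 2) (by omega) (by omega)
          have e1 : rot n ℓ (tauT ℓ - 2) = 0 := by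
            rw [rot_eq_low (by omega), show tauT ℓ - 2 + 1 = tauT ℓ - 1 from by omega, htone]
          have e2 : rot n ℓ (2 * x + 1) = ℓ (2 * x + 2) - 1 := by
            have := rot_eq_low (n := n) (ℓ := ℓ) (k := 2 * x + 1) (by omega)
            rwa [show 2 * x + 1 + 1 = 2 * x + 2 from by omega] at this
          have e3 : rot n ℓ (2 * y + 1) = ℓ (2 * y + 2) + 1 := by
            have := rot_eq_high (n := n) (ℓ := ℓ) (k := 2 * y + 1) (by omega) (by omega)
            rwa [show 2 * y + 1 + 1 = 2 * y + 2 from by omega] at this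
          have hp := htpos (2 * x + 2) (by omega) (by omega)
          omega
        · rintro ⟨-, -, he, hm⟩
          have h1 := hm (tauT ℓ) (by omega) (by omega)
          rw [htz] at h1
          have hp := htpos (2 * x + 1 + 1) (by omega) (by omega)
          omega
  · have hy0 : (y + 1) % n = 0 := by rw [show y + 1 = n from by omega, Nat.mod_self]
    rw [hy0]
    rcases eq_or_lt_of_le hxy with he | hlt
    · subst he
      rw [hy0]
      apply iff_of_true (DyckRel.refl (by omega)) (DyckRel.refl (by omega))
    · have hx1 : (x + 1) % n = x + 1 := Nat.mod_eq_of_lt (by omega)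
      rw [hx1, show (2 * 0 : ℕ) = 0 from by norm_num,
        show 2 * (x + 1) = 2 * x + 2 from by omega]
      have e3 : rot n ℓ (2 * y + 1) = 1 := by
        have := rot_eq_high (n := n) (ℓ := ℓ) (k := 2 * y + 1) (by omega) (by omega)
        rw [show 2 * y + 1 + 1 = 2 * n from by omega, h.2.1 _ le_rfl] at this
        omega
      constructor
      · intro hr
        obtain ⟨-, -, he, hm⟩ := hr
        have hz : ℓ (2 * x + 2) = 0 := by
          by_cases hcc : 2 * x + 3 ≤ tauT ℓ
          · exfalso
            have h1 := hm (tauT ℓ - 2) (by omega) (by omega)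
            have e1 : rot n ℓ (tauT ℓ - 2) = 0 := by
              rw [rot_eq_low (by omega), show tauT ℓ - 2 + 1 = tauT ℓ - 1 from by omega, htone]
            have e2 : rot n ℓ (2 * x + 1) = ℓ (2 * x + 2) - 1 := by
              have := rot_eq_low (n := n) (ℓ := ℓ) (k := 2 * x + 1) (by omega)
              rwa [show 2 * x + 1 + 1 = 2 * x + 2 from by omega] at this
            have hp := htpos (2 * x + 2) (by omega) (by omega)
            omega
          · have e2 : rot n ℓ (2 * x + 1) = ℓ (2 * x + 2) + 1 := by
              have := rot_eq_high (n := n) (ℓ := ℓ) (k := 2 * x + 1) (by omega) (by omega)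
              rwa [show 2 * x + 1 + 1 = 2 * x + 2 from by omega] at this
            omega
        exact DyckRel.symm ((dyckRel_zero h (by omega)).mpr hz)
      · intro hr
        have hz : ℓ (2 * x + 2) = 0 := (dyckRel_zero h (by omega)).mp (DyckRel.symm hr)
        have hτle2 : tauT ℓ ≤ 2 * x + 2 := by
          by_contra hc
          have := htpos (2 * x + 2) (by omega) (by omega)
          omega
        have e2 : rot n ℓ (2 * x + 1) = ℓ (2 * x + 2) + 1 := by
          have := rot_eq_high (n := n) (ℓ := ℓ) (k := 2 * x + 1) (by omega) (by omega)
          rwa [show 2 * x + 1 + 1 = 2 * x + 2 from by omega] at this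
        refine ⟨by omega, by omega, by omega, fun r h1 h2 => ?_⟩
        have er : rot n ℓ r = ℓ (r + 1) + 1 := rot_eq_high (by omega) (by omega)
        omega

lemma odd_transfer' (h : IsDyckPath n ℓ) (hn : 0 < n) {x y : ℕ} (hx : x < n) (hy : y < n) :
    DyckRel n (rot n ℓ) (2 * x + 1) (2 * y + 1) ↔
      DyckRel n ℓ (2 * ((x + 1) % n)) (2 * ((y + 1) % n)) := by
  rcases le_total x y with hxy | hxy
  · exact odd_transfer h hn hxy hy
  · have t := odd_transfer h hn hxy hx
    exact ⟨fun hr => DyckRel.symm (t.mp (DyckRel.symm hr)),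
      fun hr => DyckRel.symm (t.mpr (DyckRel.symm hr))⟩

lemma even_classes_rot (h : IsDyckPath n ℓ) (hn : 0 < n) :
    dyckEvenClasses n (rot n ℓ) = dyckOddClasses n ℓ := by
  have hset : ∀ j, j < n → {i | i < n ∧ DyckRel n (rot n ℓ) (2 * i) (2 * j)} =
      {i | i < n ∧ DyckRel n ℓ (2 * i + 1) (2 * j + 1)} := by
    intro j hj
    ext i
    simp only [Set.mem_setOf_eq]
    exact and_congr_right fun hi => even_transfer' h hn hi hj
  ext B
  simp only [dyckEvenClasses, dyckOddClasses, Set.mem_setOf_eq]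
  constructor
  · rintro ⟨j, hj, rfl⟩
    exact ⟨j, hj, hset j hj⟩
  · rintro ⟨j, hj, rfl⟩
    exact ⟨j, hj, (hset j hj).symm⟩

lemma odd_classes_rot (h : IsDyckPath n ℓ) (hn : 0 < n) :
    dyckOddClasses n (rot n ℓ) =
      (fun B => (fun i => (i + (n - 1)) % n) '' B) '' dyckEvenClasses n ℓ := by
  have hset : ∀ j, j < n → {i | i < n ∧ DyckRel n (rot n ℓ) (2 * i + 1) (2 * j + 1)} =
      (fun i => (i + (n - 1)) % n) '' {i | i < n ∧ DyckRel n ℓ (2 * i) (2 * ((j + 1) % n))} := by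
    intro j hj
    ext i
    simp only [Set.mem_image, Set.mem_setOf_eq]
    constructor
    · rintro ⟨hi, hrel⟩
      exact ⟨(i + 1) % n, ⟨Nat.mod_lt _ hn, (odd_transfer' h hn hi hj).mp hrel⟩,
        shift_sigma hn hi⟩
    · rintro ⟨i', ⟨hi', hrel⟩, rfl⟩
      refine ⟨Nat.mod_lt _ hn, ?_⟩
      apply (odd_transfer' h hn (Nat.mod_lt _ hn) hj).mpr
      rw [sigma_shift hn hi']
      exact hrel
  ext B
  simp only [dyckOddClasses, dyckEvenClasses, Set.mem_image, Set.mem_setOf_eq]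
  constructor
  · rintro ⟨j, hj, rfl⟩
    exact ⟨{i | i < n ∧ DyckRel n ℓ (2 * i) (2 * ((j + 1) % n))},
      ⟨(j + 1) % n, Nat.mod_lt _ hn, rfl⟩, (hset j hj).symm⟩
  · rintro ⟨C, ⟨j', hj', rfl⟩, rfl⟩
    refine ⟨(j' + (n - 1)) % n, Nat.mod_lt _ hn, ?_⟩
    rw [hset _ (Nat.mod_lt _ hn), sigma_shift hn hj']

end KrewerasAux4

/-- Let `P` be a noncrossing partition of `{0, …, n-1}`, let `ℓ` be its
encoding `2n`-step Dyck path (so `Φ(ℓ) = P`), so that the Kreweras complement of `P` is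
`K(P) = Ψ(ℓ)`, and let `ℓ'` be the encoding Dyck path of `K(P)` (so `Φ(ℓ') = Ψ(ℓ)`), so
that `K(K(P)) = Ψ(ℓ')`. Then `K(K(P))` equals the image of `P` under the cyclic shift
`i ↦ i - 1 (mod n)`. -/
theorem kreweras_squared (n : ℕ) (hn : 0 < n) (P : Set (Set ℕ)) (hP : IsNCPartition n P)
    (ℓ ℓ' : ℕ → ℕ) (hℓ : IsDyckPath n ℓ) (hℓP : dyckEvenClasses n ℓ = P)
    (hℓ' : IsDyckPath n ℓ') (hℓ'K : dyckEvenClasses n ℓ' = dyckOddClasses n ℓ) :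
    dyckOddClasses n ℓ' = (fun B => (fun i => (i + (n - 1)) % n) '' B) '' P := by
  have hρ : IsDyckPath n (rot n ℓ) := rot_isDyck hℓ hn
  have hCeq : dyckEvenClasses n ℓ' = dyckEvenClasses n (rot n ℓ) := by
    rw [hℓ'K, even_classes_rot hℓ hn]
  have hrel : ∀ i j, i < n → j < n →
      (DyckRel n ℓ' (2 * i) (2 * j) ↔ DyckRel n (rot n ℓ) (2 * i) (2 * j)) := by
    intro i j hi hj
    rw [rel_iff_mem hℓ' hi hj, rel_iff_mem hρ hi hj, hCeq]
  have heq : ℓ' = rot n ℓ := dyck_ext hn hℓ' hρ hrel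
  rw [heq, odd_classes_rot hℓ hn, hℓP]
end

section
/- Let n be a positive integer and ℓ a 4n-step Dyck path. The equivalence classes of ∼_ℓ among the odd indices 1, 3, …, 4n−1 all have exactly two elements if and only if |ℓ_{2k+2} − ℓ_{2k}| = 2 for every k ∈ {0, 1, …, 2n−1}. -/
/-- Let `ℓ` be a `4n`-step Dyck path. The equivalence classes of `∼_ℓ`
among the odd indices `1, 3, …, 4n-1` all have exactly two elements if and only if
`|ℓ_{2k+2} - ℓ_{2k}| = 2` for every `k ∈ {0, 1, …, 2n-1}`. -/
theorem odd_classes_pairs_iff (n : ℕ) (hn : 0 < n) (ℓ : ℕ → ℕ)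
    (hℓ : IsDyckPath (2 * n) ℓ) :
    (∀ j, j < 4 * n → j % 2 = 1 →
        {i | i < 4 * n ∧ i % 2 = 1 ∧ DyckRel (2 * n) ℓ i j}.ncard = 2)
      ↔ ∀ k, k < 2 * n →
          (ℓ (2 * k + 2) = ℓ (2 * k) + 2 ∨ ℓ (2 * k) = ℓ (2 * k + 2) + 2) := by
  classical
  obtain ⟨h0, htop, hstep⟩ := hℓ
  have hstep' : ∀ k, k < 4 * n → ℓ (k + 1) = ℓ k + 1 ∨ ℓ k = ℓ (k + 1) + 1 := by
    intro k hk; exact hstep k (by omega)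
  have hend : ℓ (4 * n) = 0 := htop _ (by omega)
  have parity : ∀ j, j ≤ 4 * n → ℓ j % 2 = j % 2 := by
    intro j
    induction j with
    | zero => intro _; simp [h0]
    | succ j ih =>
      intro hj
      have := ih (by omega)
      rcases hstep' j (by omega) with h | h <;> omega
  have main : ∀ j, j < 4 * n → j % 2 = 1 → ∃ a b : ℕ,
      a < j ∧ j < b ∧ b ≤ 4 * n ∧
      ℓ a + 1 = ℓ j ∧ ℓ (a + 1) = ℓ j ∧ ℓ b + 1 = ℓ j ∧ ℓ (b - 1) = ℓ j ∧
      (∀ k, a < k → k < b → ℓ j ≤ ℓ k) ∧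
      {i | i < 4 * n ∧ i % 2 = 1 ∧ DyckRel (2 * n) ℓ i j}
        = {i | a < i ∧ i < b ∧ ℓ i = ℓ j} := by
    intro j hj hjodd
    have hhodd : ℓ j % 2 = 1 := by have := parity j (by omega); omega
    have hhpos : 0 < ℓ j := by omega
    have hbex : ∃ t, j < t ∧ ℓ t < ℓ j := ⟨4 * n, hj, by rw [hend]; omega⟩
    obtain ⟨b, hjb, hblt, hbmin, hble⟩ : ∃ b, j < b ∧ ℓ b < ℓ j ∧
        (∀ t, t < b → ¬(j < t ∧ ℓ t < ℓ j)) ∧ b ≤ 4 * n :=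
      ⟨Nat.find hbex, (Nat.find_spec hbex).1, (Nat.find_spec hbex).2,
        fun t ht => Nat.find_min hbex ht,
        Nat.find_min' hbex ⟨hj, by rw [hend]; omega⟩⟩
    obtain ⟨a, haP, hale, hamax'⟩ : ∃ a, ℓ a < ℓ j ∧ a ≤ j ∧
        ∀ t, a < t → t ≤ j → ¬ ℓ t < ℓ j :=
      ⟨Nat.findGreatest (fun t => ℓ t < ℓ j) j,
        Nat.findGreatest_spec (P := fun t => ℓ t < ℓ j) (Nat.zero_le j)
          (show ℓ 0 < ℓ j by omega),
        Nat.findGreatest_le j,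
        fun t h1 h2 => Nat.findGreatest_is_greatest (P := fun t => ℓ t < ℓ j) h1 h2⟩
    have haj : a < j := lt_of_le_of_ne hale (fun h => by rw [h] at haP; omega)
    have hamax : ∀ t, a < t → t ≤ j → ℓ j ≤ ℓ t := by
      intro t h1 h2
      have := hamax' t h1 h2
      omega
    have hmid : ∀ t, a < t → t < b → ℓ j ≤ ℓ t := by
      intro t h1 h2
      rcases le_or_gt t j with h3 | h3
      · exact hamax t h1 h3
      · have := hbmin t h2; omega
    have hstepA := hstep' a (by omega)
    have hA : ℓ (a + 1) = ℓ j ∧ ℓ a + 1 = ℓ j := by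
      have h2 : ℓ j ≤ ℓ (a + 1) := hamax (a + 1) (by omega) (by omega)
      rcases hstepA with h | h <;> omega
    have hstepB := hstep' (b - 1) (by omega)
    rw [show b - 1 + 1 = b by omega] at hstepB
    have hBmid : ℓ j ≤ ℓ (b - 1) := by
      rcases Nat.lt_or_ge j (b - 1) with h | h
      · exact hmid (b - 1) (by omega) (by omega)
      · have : b - 1 = j := by omega
        rw [this]
    have hB : ℓ (b - 1) = ℓ j ∧ ℓ b + 1 = ℓ j := by
      rcases hstepB with h | h <;> omega
    refine ⟨a, b, haj, hjb, hble, hA.2, hA.1, hB.2, hB.1, hmid, ?_⟩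
    ext i
    simp only [Set.mem_setOf_eq]
    constructor
    · rintro ⟨hi4, hiodd, hD⟩
      have hD' : i ≤ 2 * (2 * n) ∧ j ≤ 2 * (2 * n) ∧ ℓ i = ℓ j ∧
          ∀ k, min i j ≤ k → k ≤ max i j → ℓ i ≤ ℓ k := hD
      obtain ⟨-, -, hij, hmin2⟩ := hD'
      refine ⟨?_, ?_, hij⟩
      · by_contra hc
        have := hmin2 a (by omega) (by omega)
        omega
      · by_contra hc
        have := hmin2 b (by omega) (by omega)
        omega
    · rintro ⟨h1, h2, h3⟩
      have hi4 : i < 4 * n := by omega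
      have hio : i % 2 = 1 := by have := parity i (by omega); omega
      refine ⟨hi4, hio, ?_⟩
      show i ≤ 2 * (2 * n) ∧ j ≤ 2 * (2 * n) ∧ ℓ i = ℓ j ∧
          ∀ k, min i j ≤ k → k ≤ max i j → ℓ i ≤ ℓ k
      refine ⟨by omega, by omega, h3, ?_⟩
      intro k hk1 hk2
      have := hmid k (by omega) (by omega)
      omega
  constructor
  · intro hL k hk
    by_contra hcon
    push_neg at hcon
    have s1 := hstep' (2 * k) (by omega)
    have s2 := hstep' (2 * k + 1) (by omega)
    rw [show 2 * k + 1 + 1 = 2 * k + 2 by omega] at s2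
    obtain ⟨a, b, haj, hjb, hble, haL, haR, hbL, hbR, hmid, hSeq⟩ :=
      main (2 * k + 1) (by omega) (by omega)
    have hLc := hL (2 * k + 1) (by omega) (by omega)
    rw [hSeq] at hLc
    rcases s1 with u1 | d1 <;> rcases s2 with u2 | d2
    · omega
    · -- peak at 2k+1
      have hha : a = 2 * k := by
        by_contra h
        have := hmid (2 * k) (by omega) (by omega)
        omega
      have hhb : b = 2 * k + 2 := by
        by_contra h
        have := hmid (2 * k + 2) (by omega) (by omega)
        omega
      have hset : {i | a < i ∧ i < b ∧ ℓ i = ℓ (2 * k + 1)} = {2 * k + 1} := by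
        ext i
        simp only [Set.mem_setOf_eq, Set.mem_singleton_iff]
        constructor
        · rintro ⟨x1, x2, x3⟩; omega
        · rintro rfl; exact ⟨by omega, by omega, rfl⟩
      rw [hset, Set.ncard_singleton] at hLc
      omega
    · -- valley at 2k+1
      have hna : a ≠ 2 * k := fun h => by rw [h] at haL; omega
      have hna1 : a + 1 ≠ 2 * k := fun h => by rw [h] at haR; omega
      have hnb : b ≠ 2 * k + 2 := fun h => by rw [h] at hbL; omega
      have hnb1 : b - 1 ≠ 2 * k + 2 := fun h => by rw [h] at hbR; omega
      have hlt1 : a + 1 < 2 * k := by omega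
      have hlt2 : 2 * k + 2 < b - 1 := by omega
      have hsub : ({a + 1, 2 * k + 1, b - 1} : Set ℕ) ⊆
          {i | a < i ∧ i < b ∧ ℓ i = ℓ (2 * k + 1)} := by
        intro i hi
        simp only [Set.mem_insert_iff, Set.mem_singleton_iff] at hi
        rcases hi with rfl | rfl | rfl
        · exact ⟨by omega, by omega, haR⟩
        · exact ⟨haj, hjb, rfl⟩
        · exact ⟨by omega, by omega, hbR⟩
      have hfin : {i | a < i ∧ i < b ∧ ℓ i = ℓ (2 * k + 1)}.Finite :=
        (Set.finite_Iio b).subset (fun i hi => hi.2.1)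
      have h3 : ({a + 1, 2 * k + 1, b - 1} : Set ℕ).ncard = 3 := by
        rw [Set.ncard_insert_of_notMem
            (by simp only [Set.mem_insert_iff, Set.mem_singleton_iff]; omega),
          Set.ncard_insert_of_notMem
            (by simp only [Set.mem_singleton_iff]; omega),
          Set.ncard_singleton]
      have := Set.ncard_le_ncard hsub hfin
      omega
    · omega
  · intro hR j hj hjodd
    obtain ⟨a, b, haj, hjb, hble, haL, haR, hbL, hbR, hmid, hSeq⟩ := main j hj hjodd
    have hhodd : ℓ j % 2 = 1 := by have := parity j (by omega); omega
    rw [hSeq]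
    have hne : a + 1 ≠ b - 1 := by
      intro h
      obtain ⟨m, hm⟩ : ∃ m, j = 2 * m + 1 := ⟨j / 2, by omega⟩
      have h1 := hR m (by omega)
      have e1 : 2 * m = a := by omega
      have e2 : a + 2 = b := by omega
      rw [e1, e2] at h1
      omega
    have hset : {i | a < i ∧ i < b ∧ ℓ i = ℓ j} = {a + 1, b - 1} := by
      ext i
      simp only [Set.mem_setOf_eq, Set.mem_insert_iff, Set.mem_singleton_iff]
      constructor
      · rintro ⟨x1, x2, x3⟩
        by_contra hcc
        push_neg at hcc
        have hi1 : a + 1 < i := by omega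
        have hi2 : i < b - 1 := by omega
        have hio : i % 2 = 1 := by have := parity i (by omega); omega
        obtain ⟨m, hm⟩ : ∃ m, i = 2 * m + 1 := ⟨i / 2, by omega⟩
        have hs1 := hstep' (2 * m) (by omega)
        have hs2 := hstep' (2 * m + 1) (by omega)
        rw [show 2 * m + 1 + 1 = 2 * m + 2 by omega] at hs2
        have hm1 : ℓ j ≤ ℓ (2 * m) := hmid (2 * m) (by omega) (by omega)
        have hm2 : ℓ j ≤ ℓ (2 * m + 2) := hmid (2 * m + 2) (by omega) (by omega)
        have hmm : ℓ (2 * m + 1) = ℓ j := by rw [← hm]; exact x3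
        have hvr := hR m (by omega)
        omega
      · rintro (rfl | rfl)
        · exact ⟨by omega, by omega, haR⟩
        · exact ⟨by omega, by omega, hbR⟩
    rw [hset]
    exact Set.ncard_pair hne
end
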